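/- arXiv:2408.13900 — 6 statements merged into one kernel-verified Lean document; each statement's English description precedes it below -/
import Mathlib

section
/- Let α ∈ F_q((t)) with v_t(α) > 0 and p not dividing v_t(α). Then for natural numbers m ≥ n ≥ 1: there exists k ∈ ℕ with m = n·p^k if and only if there exists a ∈ F_q((t)) with α^{-m} - α^{-n} = a^p - a. -/
section Aux

variable {p : ℕ} [Fact p.Prime] {F : Type*} [Field F] [CharP F p]

lemma ls_charP : CharP (LaurentSeries F) p :=
  charP_of_injective_ringHom (HahnSeries.C_injective (Γ := ℤ) (R := F)) p

lemma ls_order_inv (α : LaurentSeries F) (hα : α ≠ 0) : (α⁻¹).order = - α.order := by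
  have := HahnSeries.order_mul hα (inv_ne_zero hα)
  rw [mul_inv_cancel₀ hα, HahnSeries.order_one] at this
  linarith

lemma ls_order_zpow (α : LaurentSeries F) (hα : α ≠ 0) (e : ℤ) :
    (α ^ e).order = e * α.order := by
  obtain ⟨k, rfl | rfl⟩ := e.eq_nat_or_neg
  · rw [zpow_natCast, HahnSeries.order_pow]
    push_cast [nsmul_eq_mul]
    ring
  · rw [zpow_neg, zpow_natCast, ls_order_inv _ (pow_ne_zero _ hα), HahnSeries.order_pow]
    push_cast [nsmul_eq_mul]
    ring

lemma ls_order_add_left (x y : LaurentSeries F) (hx : x ≠ 0)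
    (h : x.orderTop < y.orderTop) : x + y ≠ 0 ∧ (x + y).order = x.order := by
  have h2 := HahnSeries.orderTop_add_eq_left h
  have hxy : x + y ≠ 0 := by
    intro h0
    rw [h0, HahnSeries.orderTop_zero, HahnSeries.orderTop_of_ne_zero hx] at h2
    exact WithTop.coe_ne_top h2.symm
  refine ⟨hxy, ?_⟩
  have h3 : ((x + y).order : WithTop ℤ) = (x.order : WithTop ℤ) := by
    rw [HahnSeries.order_eq_orderTop_of_ne_zero hxy, HahnSeries.order_eq_orderTop_of_ne_zero hx, h2]
  exact_mod_cast h3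

/-- Key backwards lemma, by strong induction. -/
lemma ls_key (α : LaurentSeries F) (hα0 : α ≠ 0) (hα : 0 < α.order)
    (hpα : ¬ (p : ℤ) ∣ α.order) :
    ∀ N m n : ℕ, m + n ≤ N → 1 ≤ n → n < m →
      (∃ a : LaurentSeries F, α ^ (-(m : ℤ)) - α ^ (-(n : ℤ)) = a ^ p - a) →
      ∃ k : ℕ, m = n * p ^ k := by
  haveI : CharP (LaurentSeries F) p := ls_charP
  have hp : p.Prime := Fact.out
  have hp2 : 2 ≤ p := hp.two_le
  intro N
  induction N using Nat.strong_induction_on with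
  | _ N IH =>
    rintro m n hN hn hnm ⟨a, ha⟩
    set v : ℤ := α.order with hv
    -- auxiliary order computations
    have hzne : ∀ j : ℕ, α ^ (-(j : ℤ)) ≠ 0 := fun j => zpow_ne_zero _ hα0
    have hzord : ∀ j : ℕ, (α ^ (-(j : ℤ))).order = -(j : ℤ) * v :=
      fun j => ls_order_zpow α hα0 _
    have hot : (α ^ (-(m : ℤ))).orderTop < (-(α ^ (-(n : ℤ)))).orderTop := by
      rw [HahnSeries.orderTop_neg, ← HahnSeries.order_eq_orderTop_of_ne_zero (hzne m),
        ← HahnSeries.order_eq_orderTop_of_ne_zero (hzne n)]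
      rw [WithTop.coe_lt_coe, hzord, hzord]
      have h1 : (n : ℤ) < m := by exact_mod_cast hnm
      nlinarith [hα]
    obtain ⟨hβne, hβord⟩ := ls_order_add_left _ _ (hzne m) hot
    rw [← sub_eq_add_neg] at hβne hβord
    rw [hzord m] at hβord
    -- a ≠ 0
    have ha0 : a ≠ 0 := by
      rintro rfl
      apply hβne
      rw [ha, zero_pow hp.ne_zero, sub_zero]
    -- order of a is negative
    have haneg : a.order < 0 := by
      by_contra h
      push_neg at h
      have hsum : a ^ p + (-a) ≠ 0 := by rw [← sub_eq_add_neg, ← ha]; exact hβne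
      have hmin := HahnSeries.min_order_le_order_add hsum
      rw [← sub_eq_add_neg, ← ha, hβord, HahnSeries.order_neg, HahnSeries.order_pow,
        nsmul_eq_mul] at hmin
      have h0 : (0:ℤ) ≤ min ((p:ℤ) * a.order) a.order := le_min (by positivity) h
      have hm1 : (1:ℤ) ≤ m := by exact_mod_cast le_trans hn (le_of_lt hnm)
      nlinarith [hα]
    -- order of a^p - a  is p * order a
    have hotp : (a ^ p).orderTop < (-a).orderTop := by
      rw [HahnSeries.orderTop_neg, ← HahnSeries.order_eq_orderTop_of_ne_zero (pow_ne_zero _ ha0),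
        ← HahnSeries.order_eq_orderTop_of_ne_zero ha0, WithTop.coe_lt_coe, HahnSeries.order_pow,
        nsmul_eq_mul]
      have : (2:ℤ) ≤ p := by exact_mod_cast hp2
      nlinarith
    obtain ⟨-, hord2⟩ := ls_order_add_left _ _ (pow_ne_zero _ ha0) hotp
    rw [← sub_eq_add_neg, ← ha, hβord, HahnSeries.order_pow, nsmul_eq_mul] at hord2
    -- p divides m
    have hdvd : (p:ℤ) ∣ (m:ℤ) * v := ⟨-a.order, by linarith [hord2]⟩
    have hpm : p ∣ m := by
      have := (Int.Prime.dvd_mul' (by exact_mod_cast hp) hdvd).resolve_right hpα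
      exact_mod_cast this
    obtain ⟨m', rfl⟩ := hpm
    have hm'1 : 1 ≤ m' := by
      rcases Nat.eq_zero_or_pos m' with rfl | h
      · rw [mul_zero] at hnm; omega
      · exact h
    -- the reduced Artin–Schreier relation
    set b : LaurentSeries F := a - α ^ (-(m' : ℤ)) with hb
    have hfr : (α ^ (-(m' : ℤ))) ^ p = α ^ (-((p * m' : ℕ) : ℤ)) := by
      rw [← zpow_natCast (α ^ (-(m' : ℤ))), ← zpow_mul]
      congr 1
      push_cast
      ring
    have hred : α ^ (-(m' : ℤ)) - α ^ (-(n : ℤ)) = b ^ p - b := by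
      rw [hb, sub_pow_char, hfr]
      linear_combination ha
    -- compare m' and n
    rcases lt_trichotomy m' n with hlt | rfl | hgt
    · -- impossible
      exfalso
      have hred' : α ^ (-(n : ℤ)) - α ^ (-(m' : ℤ)) = (-b) ^ p - (-b) := by
        have : (-b) ^ p = -(b ^ p) := by
          rw [← frobenius_def, map_neg, frobenius_def]
        rw [this]
        linear_combination -hred
      obtain ⟨j, hj⟩ := IH (n + m') (by omega) n m' le_rfl hm'1 hlt ⟨-b, hred'⟩
      rcases Nat.eq_zero_or_pos j with rfl | hj1
      · simp at hj; omega
      have : p ^ 1 ≤ p ^ j := Nat.pow_le_pow_right (by omega) hj1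
      rw [pow_one] at this
      nlinarith
    · exact ⟨1, by ring⟩
    · obtain ⟨k, hk⟩ := IH (m' + n) (by nlinarith) m' n le_rfl hn hgt ⟨b, hred⟩
      exact ⟨k + 1, by rw [hk]; ring⟩

end Aux

/-- For `α` with `v_t(α) > 0` not divisible by `p`, and `m ≥ n ≥ 1`:
`n |_p m` iff `α^{-m} - α^{-n}` is in the image of the Artin–Schreier map. -/
theorem stmt_3 (p : ℕ) [Fact p.Prime] (r : ℕ) (hr : 0 < r)
    (F : Type*) [Field F] [Fintype F] [CharP F p] (hq : Fintype.card F = p ^ r)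
    (α : LaurentSeries F) (hα : 0 < α.order) (hpα : ¬ (p : ℤ) ∣ α.order)
    (m n : ℕ) (hn : 1 ≤ n) (hnm : n ≤ m) :
    (∃ k : ℕ, m = n * p ^ k) ↔
      ∃ a : LaurentSeries F, α ^ (-(m : ℤ)) - α ^ (-(n : ℤ)) = a ^ p - a := by
  haveI : CharP (LaurentSeries F) p := ls_charP
  have hp : p.Prime := Fact.out
  have hα0 : α ≠ 0 := by
    rintro rfl
    rw [HahnSeries.order_zero] at hα
    exact lt_irrefl 0 hα
  constructor
  · rintro ⟨k, rfl⟩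
    refine ⟨∑ i ∈ Finset.range k, α ^ (-((n * p ^ i : ℕ) : ℤ)), ?_⟩
    rw [sum_pow_char, ← Finset.sum_sub_distrib]
    have hterm : ∀ i : ℕ, (α ^ (-((n * p ^ i : ℕ) : ℤ))) ^ p - α ^ (-((n * p ^ i : ℕ) : ℤ))
        = α ^ (-((n * p ^ (i + 1) : ℕ) : ℤ)) - α ^ (-((n * p ^ i : ℕ) : ℤ)) := by
      intro i
      congr 1
      rw [← zpow_natCast (α ^ (-((n * p ^ i : ℕ) : ℤ))), ← zpow_mul]
      congr 1
      push_cast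
      ring
    rw [Finset.sum_congr rfl fun i _ => hterm i,
      Finset.sum_range_sub (fun i => α ^ (-((n * p ^ i : ℕ) : ℤ)))]
    rw [pow_zero, mul_one]
  · rintro ⟨a, ha⟩
    rcases eq_or_lt_of_le hnm with rfl | hlt
    · exact ⟨0, by ring⟩
    · exact ls_key α hα0 hα hpα (m + n) m n le_rfl hn hlt ⟨a, ha⟩
end

section
/- Let α = β^{p^k} in F_q((t)) where v_t(β) > 0 is not divisible by p and k ∈ ℕ. Then for natural numbers m ≥ n ≥ 1: n |_p m holds if and only if there exists a ∈ F_q((t)) with α^{-m} - α^{-n} = a^p - a. -/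
section Aux

variable {F : Type*} [Field F]

instance aux_charP (p : ℕ) [CharP F p] : CharP (LaurentSeries F) p :=
  charP_of_injective_ringHom (algebraMap F (LaurentSeries F)).injective p

lemma aux_order_inv (x : LaurentSeries F) (hx : x ≠ 0) : (x⁻¹).order = -x.order := by
  have h := HahnSeries.order_mul (inv_ne_zero hx) hx
  rw [inv_mul_cancel₀ hx, HahnSeries.order_one] at h
  linarith

lemma aux_order_zpow (x : LaurentSeries F) (hx : x ≠ 0) (z : ℤ) :
    (x ^ z).order = z * x.order := by
  cases z with
  | ofNat n =>
      rw [Int.ofNat_eq_coe, zpow_natCast, HahnSeries.order_pow]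
      simp [nsmul_eq_mul]
  | negSucc n =>
      rw [zpow_negSucc, aux_order_inv _ (pow_ne_zero _ hx), HahnSeries.order_pow,
        Int.negSucc_eq]
      simp [nsmul_eq_mul]
      ring

lemma aux_zpow_ne_zero (x : LaurentSeries F) (hx : x ≠ 0) (z : ℤ) : x ^ z ≠ 0 :=
  zpow_ne_zero z hx

lemma aux_order_sub (x y : LaurentSeries F) (hx : x ≠ 0) (hy : y ≠ 0)
    (h : x.order < y.order) : (x - y).order = x.order := by
  have hot : x.orderTop < (-y).orderTop := by
    rw [HahnSeries.orderTop_neg, ← HahnSeries.order_eq_orderTop_of_ne_zero hx,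
      ← HahnSeries.order_eq_orderTop_of_ne_zero hy]
    exact_mod_cast h
  have h2 : (x + (-y)).orderTop = x.orderTop := HahnSeries.orderTop_add_eq_left hot
  have hne : x + (-y) ≠ 0 := by
    rw [← HahnSeries.orderTop_ne_top, h2, HahnSeries.orderTop_ne_top]
    exact hx
  have := h2
  rw [← HahnSeries.order_eq_orderTop_of_ne_zero hne, ← HahnSeries.order_eq_orderTop_of_ne_zero hx] at this
  rw [sub_eq_add_neg]
  exact_mod_cast this

variable (p : ℕ) [Fact p.Prime] [CharP F p]

/-- If `a^p - a` has negative order, then `p` divides the order. -/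
lemma aux_wp_order (a : LaurentSeries F) (h : (a ^ p - a).order < 0) :
    (p : ℤ) ∣ (a ^ p - a).order := by
  have hp := (Fact.out : p.Prime)
  have hxne : a ^ p - a ≠ 0 := by
    intro h0; rw [h0, HahnSeries.order_zero] at h; exact lt_irrefl 0 h
  have ha : a ≠ 0 := by
    rintro rfl
    exact hxne (by rw [zero_pow hp.ne_zero, sub_zero])
  rcases lt_or_ge a.order 0 with hlt | hge
  · have hpa : a ^ p ≠ 0 := pow_ne_zero _ ha
    have hord : (a ^ p).order = (p : ℤ) * a.order := by
      rw [HahnSeries.order_pow]; simp [nsmul_eq_mul]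
    have hlt2 : (a ^ p).order < a.order := by
      rw [hord]
      nlinarith [hp.two_le, a.order]
    rw [aux_order_sub _ _ hpa ha hlt2, hord]
    exact ⟨a.order, rfl⟩
  · exfalso
    have : min (a ^ p).order (-a).order ≤ (a ^ p + (-a)).order :=
      HahnSeries.min_order_le_order_add (by rw [← sub_eq_add_neg]; exact hxne)
    rw [← sub_eq_add_neg] at this
    have h1 : (0 : ℤ) ≤ (a ^ p).order := by
      rw [HahnSeries.order_pow]; simp only [nsmul_eq_mul]; positivity
    have h2 : (0 : ℤ) ≤ (-a).order := by rw [HahnSeries.order_neg]; exact hge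
    have := le_trans (le_min h1 h2) this
    linarith

/-- Telescoping: `c ^ (p ^ j) - c` is always of Artin–Schreier form. -/
lemma aux_frob_reduce (c : LaurentSeries F) (j : ℕ) :
    ∃ a : LaurentSeries F, c ^ p ^ j - c = a ^ p - a := by
  induction j with
  | zero =>
      exact ⟨0, by rw [pow_zero, pow_one, zero_pow (Fact.out : p.Prime).ne_zero]; simp⟩
  | succ j ih =>
      obtain ⟨a, ha⟩ := ih
      refine ⟨c ^ p ^ j + a, ?_⟩
      rw [add_pow_char]
      have hc : c ^ p ^ (j + 1) = (c ^ p ^ j) ^ p := by rw [← pow_mul, pow_succ]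
      rw [hc]
      linear_combination ha

/-- Key negative result: if `M ≠ N` are positive, prime to `p`, then
`β^{-M} - β^{-N}` is not of Artin–Schreier form. -/
lemma aux_not_AS (β : LaurentSeries F) (hβ : 0 < β.order) (hpβ : ¬ (p : ℤ) ∣ β.order)
    (M N : ℕ) (hM : 0 < M) (hN : 0 < N) (hpM : ¬ p ∣ M) (hpN : ¬ p ∣ N) (hMN : N < M) :
    ¬ ∃ a : LaurentSeries F, β ^ (-(M : ℤ)) - β ^ (-(N : ℤ)) = a ^ p - a := by
  have hp := (Fact.out : p.Prime)
  have hβ0 : β ≠ 0 := by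
    rintro rfl; rw [HahnSeries.order_zero] at hβ; exact lt_irrefl 0 hβ
  rintro ⟨a, ha⟩
  set x := β ^ (-(M : ℤ)) - β ^ (-(N : ℤ)) with hx
  have hoM : (β ^ (-(M : ℤ))).order = -(M : ℤ) * β.order := aux_order_zpow β hβ0 _
  have hoN : (β ^ (-(N : ℤ))).order = -(N : ℤ) * β.order := aux_order_zpow β hβ0 _
  have hlt : (β ^ (-(M : ℤ))).order < (β ^ (-(N : ℤ))).order := by
    rw [hoM, hoN]
    have : (N : ℤ) < (M : ℤ) := by exact_mod_cast hMN
    nlinarith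
  have hxo : x.order = -(M : ℤ) * β.order := by
    rw [hx, aux_order_sub _ _ (aux_zpow_ne_zero β hβ0 _) (aux_zpow_ne_zero β hβ0 _) hlt, hoM]
  have hxneg : x.order < 0 := by
    rw [hxo]
    have : (0 : ℤ) < (M : ℤ) := by exact_mod_cast hM
    nlinarith
  have hxneg' : (a ^ p - a).order < 0 := by rw [← ha]; exact hxneg
  have hdvd : (p : ℤ) ∣ x.order := by rw [ha]; exact aux_wp_order p a hxneg'
  rw [hxo] at hdvd
  have hdvd' : (p : ℤ) ∣ (M : ℤ) * β.order := by
    rcases hdvd with ⟨c, hc⟩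
    exact ⟨-c, by linarith⟩
  rcases (Int.Prime.dvd_mul' hp hdvd') with h | h
  · exact hpM (by exact_mod_cast h)
  · exact hpβ h

end Aux

/-- If `α = β^{p^k}` where `v_t(β) > 0` is not divisible by `p`, then for
`m ≥ n ≥ 1`: `n |_p m` iff `α^{-m} - α^{-n} = a^p - a` has a solution. -/
theorem stmt_4 (p : ℕ) [Fact p.Prime] (r : ℕ) (hr : 0 < r)
    (F : Type*) [Field F] [Fintype F] [CharP F p] (hq : Fintype.card F = p ^ r)
    (β : LaurentSeries F) (hβ : 0 < β.order) (hpβ : ¬ (p : ℤ) ∣ β.order)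
    (k : ℕ) (α : LaurentSeries F) (hα : α = β ^ p ^ k)
    (m n : ℕ) (hn : 1 ≤ n) (hnm : n ≤ m) :
    (∃ j : ℕ, m = n * p ^ j) ↔
      ∃ a : LaurentSeries F, α ^ (-(m : ℤ)) - α ^ (-(n : ℤ)) = a ^ p - a := by
  have hp := (Fact.out : p.Prime)
  have hβ0 : β ≠ 0 := by
    rintro rfl; rw [HahnSeries.order_zero] at hβ; exact lt_irrefl 0 hβ
  have hm : 1 ≤ m := le_trans hn hnm
  -- reduce α-powers to β-powers
  have hαβ : ∀ N : ℕ, α ^ (-(N : ℤ)) = β ^ (-(N * p ^ k : ℤ)) := by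
    intro N
    rw [hα, ← zpow_natCast β (p ^ k), ← zpow_mul]
    congr 1
    push_cast
    ring
  constructor
  · -- forward: m = n * p^j
    rintro ⟨j, rfl⟩
    set c := α ^ (-(n : ℤ)) with hc
    have hkey : α ^ (-(n * p ^ j : ℤ) : ℤ) = c ^ p ^ j := by
      rw [hc, ← zpow_natCast (α ^ (-(n : ℤ))) (p ^ j), ← zpow_mul]
      congr 1
      push_cast
      ring
    obtain ⟨a, ha⟩ := aux_frob_reduce p c j
    refine ⟨a, ?_⟩
    rw [show ((↑(n * p ^ j) : ℤ)) = ((n * p ^ j : ℤ)) by push_cast; ring]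
    rw [hkey]
    exact ha
  · -- backward
    rintro ⟨a, ha⟩
    -- p-adic decompositions of m and n
    set A := m.factorization p with hA
    set B := n.factorization p with hB
    set M := m / p ^ A with hM
    set N := n / p ^ B with hN
    have hmdec : p ^ A * M = m := Nat.ordProj_mul_ordCompl_eq_self m p
    have hndec : p ^ B * N = n := Nat.ordProj_mul_ordCompl_eq_self n p
    have hM0 : 0 < M := by
      rcases Nat.eq_zero_or_pos M with h | h
      · rw [h, mul_zero] at hmdec; omega
      · exact h
    have hN0 : 0 < N := by
      rcases Nat.eq_zero_or_pos N with h | h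
      · rw [h, mul_zero] at hndec; omega
      · exact h
    have hpM : ¬ p ∣ M := Nat.not_dvd_ordCompl hp (by omega)
    have hpN : ¬ p ∣ N := Nat.not_dvd_ordCompl hp (by omega)
    -- reduce α^{-m} to β^{-M} modulo Artin–Schreier
    have hred : ∀ (L : ℕ) (C D : ℕ), p ^ C * D = L →
        ∃ b : LaurentSeries F, α ^ (-(L : ℤ)) - β ^ (-(D : ℤ)) = b ^ p - b := by
      intro L C D hLCD
      obtain ⟨b, hb⟩ := aux_frob_reduce p (β ^ (-(D : ℤ))) (k + C)
      refine ⟨b, ?_⟩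
      have : α ^ (-(L : ℤ)) = (β ^ (-(D : ℤ))) ^ p ^ (k + C) := by
        rw [hαβ L, ← zpow_natCast (β ^ (-(D : ℤ))) (p ^ (k + C)), ← zpow_mul]
        congr 1
        have hL : (L : ℤ) = (p : ℤ) ^ C * D := by exact_mod_cast hLCD.symm
        push_cast
        rw [pow_add]
        linear_combination (-((p : ℤ) ^ k)) * hL
      rw [this]
      exact hb
    obtain ⟨b, hb⟩ := hred m A M hmdec
    obtain ⟨c, hc⟩ := hred n B N hndec
    -- β^{-M} - β^{-N} is of Artin–Schreier form
    have hAS : ∃ d : LaurentSeries F, β ^ (-(M : ℤ)) - β ^ (-(N : ℤ)) = d ^ p - d := by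
      refine ⟨a - b + c, ?_⟩
      rw [add_pow_char, sub_pow_char]
      linear_combination ha - hb + hc
    -- conclude M = N
    have hMN : M = N := by
      by_contra hne
      rcases lt_or_gt_of_ne hne with h | h
      · refine aux_not_AS p β hβ hpβ N M hN0 hM0 hpN hpM h ?_
        obtain ⟨d, hd⟩ := hAS
        refine ⟨-d, ?_⟩
        have hdp : (-d) ^ p = -(d ^ p) := by
          have : (-d) = 0 - d := by ring
          rw [this, sub_pow_char, zero_pow hp.ne_zero]
          ring
        rw [hdp]
        linear_combination -hd
      · exact absurd hAS (aux_not_AS p β hβ hpβ M N hM0 hN0 hpM hpN h)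
    -- now m = M * p^A, n = M * p^B, n ≤ m forces B ≤ A
    have hBA : B ≤ A := by
      by_contra hBA
      push_neg at hBA
      have hpow : p ^ A < p ^ B := Nat.pow_lt_pow_right hp.one_lt hBA
      have hmn : m < n := by
        calc m = p ^ A * M := hmdec.symm
          _ < p ^ B * M := (Nat.mul_lt_mul_right hM0).mpr hpow
          _ = p ^ B * N := by rw [hMN]
          _ = n := hndec
      omega
    refine ⟨A - B, ?_⟩
    have hpow : p ^ A = p ^ B * p ^ (A - B) := by
      rw [← pow_add]
      congr 1
      omega
    calc m = p ^ A * M := hmdec.symm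
      _ = (p ^ B * N) * p ^ (A - B) := by rw [hpow, hMN]; ring
      _ = n * p ^ (A - B) := by rw [hndec]
end

section
/- Let α ∈ F_q((t)) be a Laurent series which is not a p-th power, with v_t(α) > 0 divisible by p. Let N ∈ ℕ be not divisible by p. Then v̂_t(α^N) = (N - 1)·v_t(α) + v̂_t(α), where v̂_t(x) denotes the minimal exponent i with nonzero coefficient in x such that p does not divide i. -/
/-- `v̂_t(x)`: the minimal exponent of `x` not divisible by `p` with nonzero coefficient. -/
noncomputable def vhat (p : ℕ) {F : Type*} [Field F] (x : LaurentSeries F) : ℤ :=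
  sInf {i : ℤ | x.coeff i ≠ 0 ∧ ¬ (p : ℤ) ∣ i}

open HahnSeries

/-- Coefficient of a finite sum of Hahn series. -/
private lemma coeff_finset_sum {F : Type*} [Field F] {ι : Type*} (s : Finset ι)
    (f : ι → LaurentSeries F) (j : ℤ) :
    (∑ i ∈ s, f i).coeff j = ∑ i ∈ s, (f i).coeff j :=
  map_sum (HahnSeries.coeff.addMonoidHom j) f s

/-- If all nonzero coefficients of `B` sit in degrees divisible by `p`, the same holds
for all powers of `B`. -/
private lemma pow_supp {F : Type*} [Field F] {p : ℕ} {B : LaurentSeries F}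
    (hB : ∀ i : ℤ, B.coeff i ≠ 0 → (p : ℤ) ∣ i) :
    ∀ (n : ℕ) (i : ℤ), (B ^ n).coeff i ≠ 0 → (p : ℤ) ∣ i := by
  intro n
  induction n with
  | zero =>
    intro i hi
    rw [pow_zero] at hi
    have : i = 0 := by
      by_contra h
      exact hi (by rw [HahnSeries.coeff_one, if_neg h])
    simp [this]
  | succ n IH =>
    intro i hi
    rw [pow_succ] at hi
    have hmem : i ∈ (B ^ n * B).support := hi
    have := HahnSeries.support_mul_subset hmem
    obtain ⟨a, ha, b, hb, rfl⟩ := Set.mem_add.mp this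
    exact dvd_add (IH a ha) (hB b hb)

/-- If `α` is not a `p`-th power, then it has a nonzero coefficient in a degree not
divisible by `p`. -/
private lemma vhat_aux {p : ℕ} [Fact p.Prime] {F : Type*} [Field F] [Fintype F] [CharP F p]
    (α : LaurentSeries F) (hpow : ¬ ∃ y : LaurentSeries F, α = y ^ p) :
    {i : ℤ | α.coeff i ≠ 0 ∧ ¬ (p : ℤ) ∣ i}.Nonempty := by
  have hp : p ≠ 0 := (Fact.out : p.Prime).ne_zero
  have hp1 : (1 : ℤ) ≤ (p : ℤ) := by exact_mod_cast Nat.one_le_iff_ne_zero.mpr hp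
  haveI : CharP (LaurentSeries F) p :=
    charP_of_injective_ringHom (HahnSeries.C_injective (Γ := ℤ) (R := F)) p
  by_contra hne
  rw [Set.not_nonempty_iff_eq_empty] at hne
  have h : ∀ i : ℤ, α.coeff i ≠ 0 → (p : ℤ) ∣ i := by
    intro i hi
    by_contra hd
    exact Set.eq_empty_iff_forall_notMem.mp hne i ⟨hi, hd⟩
  have hα0 : α ≠ 0 := fun h0 => hpow ⟨0, by rw [h0, zero_pow hp]⟩
  -- lower bound for the support of α
  obtain ⟨L, hL⟩ : BddBelow α.support :=
    ⟨α.order, fun i hi => HahnSeries.order_le_of_coeff_ne_zero hi⟩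
  -- the coefficient function of the candidate p-th root
  set c : ℤ → F := fun i => (frobeniusEquiv F p).symm (α.coeff ((p : ℤ) * i)) with hc
  have hcne : ∀ i : ℤ, c i ≠ 0 ↔ α.coeff ((p : ℤ) * i) ≠ 0 := fun i =>
    map_ne_zero_iff _ (frobeniusEquiv F p).symm.injective
  have hbddc : ∀ i : ℤ, c i ≠ 0 → min L 0 ≤ i := by
    intro i hi
    have hmem : ((p : ℤ) * i) ∈ α.support := (hcne i).mp hi
    have hLi : L ≤ (p : ℤ) * i := hL hmem
    rcases le_or_gt 0 i with h0 | h0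
    · exact le_trans (min_le_right L 0) h0
    · have : (p : ℤ) * i ≤ i := by nlinarith
      exact le_trans (min_le_left L 0) (by linarith)
  have hpwo : (Function.support c).IsPWO := by
    rw [Set.isPWO_iff_isWF]
    exact BddBelow.wellFoundedOn_lt ⟨min L 0, fun i hi => hbddc i hi⟩
  set y : LaurentSeries F := ⟨c, hpwo⟩ with hy
  have hycoeff : ∀ i : ℤ, y.coeff i = c i := fun _ => rfl
  apply hpow
  refine ⟨y, HahnSeries.ext (funext fun j => ?_)⟩
  -- truncate y below M
  set M : ℤ := max j 0 with hM
  have hMj : j ≤ M := le_max_left _ _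
  have hM0 : (0 : ℤ) ≤ M := le_max_right _ _
  have hfin : (y.support ∩ Set.Iic M).Finite := by
    apply (Set.finite_Icc (min L 0) M).subset
    rintro i ⟨hi1, hi2⟩
    exact ⟨hbddc i hi1, hi2⟩
  set t : Finset ℤ := hfin.toFinset with ht
  have hmemt : ∀ i : ℤ, i ∈ t ↔ y.coeff i ≠ 0 ∧ i ≤ M := by
    intro i
    rw [ht, Set.Finite.mem_toFinset, Set.mem_inter_iff, HahnSeries.mem_support, Set.mem_Iic]
  set Q : LaurentSeries F := ∑ i ∈ t, HahnSeries.single i (y.coeff i) with hQ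
  set S : LaurentSeries F := y - Q with hS
  have hQcoeff : ∀ i : ℤ, Q.coeff i = if i ∈ t then y.coeff i else 0 := by
    intro i
    rw [hQ, coeff_finset_sum]
    simp only [HahnSeries.coeff_single]
    by_cases hmem : i ∈ t
    · rw [if_pos hmem]
      refine (Finset.sum_eq_single_of_mem i hmem fun b _ hb => if_neg fun h => hb h.symm).trans ?_
      exact if_pos rfl
    · rw [if_neg hmem]
      exact Finset.sum_eq_zero fun b hb => if_neg fun (h : i = b) => hmem (h.symm ▸ hb)
  have hScoeff : ∀ i : ℤ, i ≤ M → S.coeff i = 0 := by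
    intro i hi
    rw [hS, HahnSeries.coeff_sub, hQcoeff]
    by_cases hmem : i ∈ t
    · rw [if_pos hmem, sub_self]
    · have : y.coeff i = 0 := by
        by_contra hne'
        exact hmem ((hmemt i).mpr ⟨hne', hi⟩)
      rw [if_neg hmem, this, sub_zero]
  have hySQ : y = Q + S := by rw [hS]; ring
  have hyp : y ^ p = Q ^ p + S ^ p := by rw [hySQ, add_pow_char]
  -- the coefficient of S^p at j vanishes
  have hSp : (S ^ p).coeff j = 0 := by
    rcases eq_or_ne S 0 with h0 | h0
    · rw [h0, zero_pow hp, HahnSeries.coeff_zero]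
    · have hordS : M < S.order := by
        by_contra hle
        exact (HahnSeries.coeff_order_eq_zero.not.mpr h0) (hScoeff _ (not_lt.mp hle))
      apply HahnSeries.coeff_eq_zero_of_lt_order
      rw [HahnSeries.order_pow]
      have h1 : (1 : ℤ) ≤ S.order := by linarith
      have : S.order ≤ (p : ℤ) * S.order := le_mul_of_one_le_left (by linarith) hp1
      calc j ≤ M := hMj
        _ < S.order := hordS
        _ ≤ (p : ℤ) * S.order := this
        _ = p • S.order := by rw [nsmul_eq_mul]
  -- compute Q^p
  have hQp : Q ^ p = ∑ i ∈ t, HahnSeries.single ((p : ℤ) * i) (α.coeff ((p : ℤ) * i)) := by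
    rw [hQ, sum_pow_char]
    refine Finset.sum_congr rfl fun i _ => ?_
    rw [HahnSeries.single_pow]
    have h1 : p • i = (p : ℤ) * i := by rw [nsmul_eq_mul]
    have h2 : y.coeff i ^ p = α.coeff ((p : ℤ) * i) := by
      have h3 := (frobeniusEquiv F p).apply_symm_apply (α.coeff ((p : ℤ) * i))
      rw [frobeniusEquiv_def] at h3
      exact h3
    rw [h1, h2]
  have hQpj : (Q ^ p).coeff j = α.coeff j := by
    rw [hQp, coeff_finset_sum]
    by_cases hdvd : (p : ℤ) ∣ j
    · obtain ⟨i0, rfl⟩ := hdvd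
      have hsum : ∀ i ∈ t, i ≠ i0 →
          (HahnSeries.single ((p : ℤ) * i) (α.coeff ((p : ℤ) * i))).coeff ((p : ℤ) * i0) = 0 := by
        intro i _ hne'
        apply HahnSeries.coeff_single_of_ne
        intro hcontra
        exact hne' (by
          have := mul_left_cancel₀ (show (p : ℤ) ≠ 0 by positivity) hcontra
          omega)
      by_cases hmem : i0 ∈ t
      · rw [Finset.sum_eq_single_of_mem i0 hmem hsum, HahnSeries.coeff_single_same]
      · have hz : α.coeff ((p : ℤ) * i0) = 0 := by
          by_contra hne'
          have hyne : y.coeff i0 ≠ 0 := (hcne i0).mpr hne'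
          have hi0M : M < i0 := lt_of_not_ge fun hle => hmem ((hmemt i0).mpr ⟨hyne, hle⟩)
          have h2 : i0 ≤ (p : ℤ) * i0 := le_mul_of_one_le_left (by linarith) hp1
          linarith [hMj]
        rw [Finset.sum_eq_zero fun i hi => hsum i hi (fun hii => hmem (hii ▸ hi)), hz]
    · rw [Finset.sum_eq_zero, eq_comm]
      · by_contra hne'
        exact hdvd (h j hne')
      · intro i _
        apply HahnSeries.coeff_single_of_ne
        intro hcontra
        exact hdvd (hcontra ▸ Dvd.intro i rfl)
  rw [hyp, HahnSeries.coeff_add, hSp, add_zero, hQpj]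

/-- If `α` is not a `p`-th power, `v_t(α) > 0` is divisible by `p`, and
`p ∤ N`, then `v̂_t(α^N) = (N - 1)·v_t(α) + v̂_t(α)`. -/
theorem stmt_7 (p : ℕ) [Fact p.Prime] (r : ℕ) (hr : 0 < r)
    (F : Type*) [Field F] [Fintype F] [CharP F p] (hq : Fintype.card F = p ^ r)
    (α : LaurentSeries F) (hpow : ¬ ∃ y : LaurentSeries F, α = y ^ p)
    (hα : 0 < α.order) (hpα : (p : ℤ) ∣ α.order)
    (N : ℕ) (hN : ¬ p ∣ N) :
    vhat p (α ^ N) = ((N : ℤ) - 1) * α.order + vhat p α := by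
  have hp : p ≠ 0 := (Fact.out : p.Prime).ne_zero
  have hα0 : α ≠ 0 := fun h0 => hpow ⟨0, by rw [h0, zero_pow hp]⟩
  have hN0 : N ≠ 0 := fun h => hN (h ▸ dvd_zero p)
  have hN1 : 1 ≤ N := Nat.one_le_iff_ne_zero.mpr hN0
  set v : ℤ := α.order with hv
  have hSne := vhat_aux α hpow
  have hSbdd : BddBelow {i : ℤ | α.coeff i ≠ 0 ∧ ¬ (p : ℤ) ∣ i} :=
    ⟨v, fun i hi => HahnSeries.order_le_of_coeff_ne_zero hi.1⟩
  have hmem : vhat p α ∈ {i : ℤ | α.coeff i ≠ 0 ∧ ¬ (p : ℤ) ∣ i} :=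
    Int.csInf_mem hSne hSbdd
  set m : ℤ := vhat p α with hm
  obtain ⟨hm1, hm2⟩ := hmem
  have hvm : v < m :=
    lt_of_le_of_ne (HahnSeries.order_le_of_coeff_ne_zero hm1) fun h => hm2 (h ▸ hpα)
  -- split α into part B supported on multiples of p, and rest C
  have hpwoB : (Function.support fun i : ℤ => if (p : ℤ) ∣ i then α.coeff i else 0).IsPWO := by
    apply α.isPWO_support.mono
    intro i hi
    rw [Function.mem_support] at hi
    by_cases hd : (p : ℤ) ∣ i
    · rw [if_pos hd] at hi; exact hi
    · rw [if_neg hd] at hi; exact absurd rfl hi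
  set B : LaurentSeries F := ⟨fun i => if (p : ℤ) ∣ i then α.coeff i else 0, hpwoB⟩ with hBdef
  have hBc : ∀ i : ℤ, B.coeff i = if (p : ℤ) ∣ i then α.coeff i else 0 := fun _ => rfl
  set C : LaurentSeries F := α - B with hCdef
  have hCc : ∀ i : ℤ, C.coeff i = if (p : ℤ) ∣ i then 0 else α.coeff i := by
    intro i
    rw [hCdef, HahnSeries.coeff_sub, hBc]
    by_cases hd : (p : ℤ) ∣ i <;> simp [hd]
  have hB0 : B ≠ 0 := by
    intro h0
    have h1 : B.coeff v = α.coeff v := by rw [hBc, if_pos hpα]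
    rw [h0, HahnSeries.coeff_zero] at h1
    exact (HahnSeries.coeff_order_eq_zero.not.mpr hα0) h1.symm
  have hC0 : C ≠ 0 := by
    intro h0
    have h1 : C.coeff m = α.coeff m := by rw [hCc, if_neg hm2]
    rw [h0, HahnSeries.coeff_zero] at h1
    exact hm1 h1.symm
  have hBord : B.order = v := by
    apply le_antisymm
    · apply HahnSeries.order_le_of_coeff_ne_zero
      rw [hBc, if_pos hpα]
      exact HahnSeries.coeff_order_eq_zero.not.mpr hα0
    · have hne := HahnSeries.coeff_order_eq_zero.not.mpr hB0
      rw [hBc] at hne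
      by_cases hd : (p : ℤ) ∣ B.order
      · rw [if_pos hd] at hne
        exact HahnSeries.order_le_of_coeff_ne_zero hne
      · rw [if_neg hd] at hne
        exact absurd rfl hne
  have hCord : C.order = m := by
    apply le_antisymm
    · apply HahnSeries.order_le_of_coeff_ne_zero
      rw [hCc, if_neg hm2]
      exact hm1
    · have hne := HahnSeries.coeff_order_eq_zero.not.mpr hC0
      rw [hCc] at hne
      by_cases hd : (p : ℤ) ∣ C.order
      · rw [if_pos hd] at hne
        exact absurd rfl hne
      · rw [if_neg hd] at hne
        exact csInf_le hSbdd ⟨hne, hd⟩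
  have hsuppB : ∀ (n : ℕ) (i : ℤ), (B ^ n).coeff i ≠ 0 → (p : ℤ) ∣ i :=
    pow_supp fun i hi => by
      rw [hBc] at hi
      by_cases hd : (p : ℤ) ∣ i
      · exact hd
      · rw [if_neg hd] at hi; exact absurd rfl hi
  have hαCB : α = C + B := by rw [hCdef]; ring
  set j0 : ℤ := ((N : ℤ) - 1) * v + m with hj0
  have hj0nd : ¬ (p : ℤ) ∣ j0 := by
    intro hd
    apply hm2
    have h1 : (p : ℤ) ∣ ((N : ℤ) - 1) * v := Dvd.dvd.mul_left hpα _
    have : (p : ℤ) ∣ j0 - ((N : ℤ) - 1) * v := dvd_sub hd h1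
    rwa [hj0, add_sub_cancel_left] at this
  have hNF : (N : F) ≠ 0 := fun h => hN ((CharP.cast_eq_zero_iff F p N).mp h)
  -- coefficients of natCast multiples
  have hterm : ∀ (x : LaurentSeries F) (n : ℕ) (i : ℤ),
      (x * (n : LaurentSeries F)).coeff i = x.coeff i * (n : F) := by
    intro x n i
    have h1 : ((n : ℕ) : LaurentSeries F) = HahnSeries.single (0 : ℤ) ((n : ℕ) : F) := by
      rw [← map_natCast (HahnSeries.C : F →+* LaurentSeries F) n]
      rfl
    rw [h1, HahnSeries.coeff_mul_single_zero]
  have hcoeff : ∀ i : ℤ, (α ^ N).coeff i =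
      ∑ k ∈ Finset.range (N + 1), (C ^ k * B ^ (N - k)).coeff i * ((N.choose k : ℕ) : F) := by
    intro i
    rw [hαCB, add_pow, coeff_finset_sum]
    exact Finset.sum_congr rfl fun k _ => hterm _ _ _
  -- orders of the various terms
  have hord : ∀ k : ℕ, k ≤ N → (C ^ k * B ^ (N - k)).order
      = (k : ℤ) * m + ((N : ℤ) - (k : ℤ)) * v := by
    intro k hk
    rw [HahnSeries.order_mul (pow_ne_zero _ hC0) (pow_ne_zero _ hB0),
      HahnSeries.order_pow, HahnSeries.order_pow, hCord, hBord, nsmul_eq_mul, nsmul_eq_mul]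
    congr 1
    rw [Nat.cast_sub hk]
  -- terms with k ≠ 1 vanish at degrees i ≤ j0 not divisible by p
  have hterm0 : ∀ i : ℤ, ¬ (p : ℤ) ∣ i → i ≤ j0 → ∀ k ∈ Finset.range (N + 1), k ≠ 1 →
      (C ^ k * B ^ (N - k)).coeff i * ((N.choose k : ℕ) : F) = 0 := by
    intro i hnd hle k hk hk1
    rw [Finset.mem_range] at hk
    rcases Nat.eq_zero_or_pos k with rfl | hk0
    · have : (B ^ N).coeff i = 0 := by
        by_contra hne
        exact hnd (hsuppB N i hne)
      rw [pow_zero, one_mul, Nat.sub_zero, this, zero_mul]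
    · have hk2 : 2 ≤ k := by omega
      have hkN : k ≤ N := by omega
      have hkZ : (2 : ℤ) ≤ (k : ℤ) := by exact_mod_cast hk2
      have hkNZ : (k : ℤ) ≤ (N : ℤ) := by exact_mod_cast hkN
      have : i < (C ^ k * B ^ (N - k)).order := by
        rw [hord k hkN]
        have : j0 < (k : ℤ) * m + ((N : ℤ) - (k : ℤ)) * v := by
          rw [hj0]
          nlinarith [mul_pos (by linarith : (0 : ℤ) < (k : ℤ) - 1) (by linarith : (0 : ℤ) < m - v)]
        linarith
      rw [HahnSeries.coeff_eq_zero_of_lt_order this, zero_mul]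
  -- the coefficient of α^N at degrees i ≤ j0 with p ∤ i
  have hmain : ∀ i : ℤ, ¬ (p : ℤ) ∣ i → i ≤ j0 →
      (α ^ N).coeff i = (C * B ^ (N - 1)).coeff i * (N : F) := by
    intro i hnd hle
    rw [hcoeff i, Finset.sum_eq_single_of_mem 1 (Finset.mem_range.mpr (by omega))
      (fun k hk hk1 => hterm0 i hnd hle k hk hk1)]
    rw [pow_one, Nat.choose_one_right]
  have hordCB : (C * B ^ (N - 1)).order = j0 := by
    have := hord 1 hN1
    rw [pow_one] at this
    rw [this, hj0]
    push_cast
    ring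
  have hj0ne : (α ^ N).coeff j0 ≠ 0 := by
    rw [hmain j0 hj0nd le_rfl]
    apply mul_ne_zero _ hNF
    rw [← hordCB]
    exact HahnSeries.coeff_order_eq_zero.not.mpr (mul_ne_zero hC0 (pow_ne_zero _ hB0))
  have hzero : ∀ i : ℤ, ¬ (p : ℤ) ∣ i → i < j0 → (α ^ N).coeff i = 0 := by
    intro i hnd hlt
    rw [hmain i hnd hlt.le, HahnSeries.coeff_eq_zero_of_lt_order (hordCB ▸ hlt), zero_mul]
  have hleast : IsLeast {i : ℤ | (α ^ N).coeff i ≠ 0 ∧ ¬ (p : ℤ) ∣ i} j0 :=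
    ⟨⟨hj0ne, hj0nd⟩, fun i hi => not_lt.mp fun hlt => hi.1 (hzero i hi.2 hlt)⟩
  exact hleast.csInf_eq
end

section
/- Let α ∈ F_q((t)) with v_t(α) = C > 0 divisible by p, α not a p-th power, and set D = v̂_t(α^{-1}). Let N > 0 satisfy N > D/C + 1 and p ∤ N. Then for all m, n > 0: (∃ k, m = n·p^k) if and only if m ≥ n and there exists a ∈ F_q((t)) with α^{-mN} - α^{-nN} = a^p - a. -/
open HahnSeries

namespace Stmt10Aux

variable {F : Type*} [Field F]

/-- coefficientwise characterization of order -/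
lemma order_eq_of_coeff {x : LaurentSeries F} {o : ℤ} (ho : x.coeff o ≠ 0)
    (hb : ∀ i < o, x.coeff i = 0) : x.order = o := by
  have hx : x ≠ 0 := fun h => ho (by simp [h])
  have h1 : x.order ≤ o := HahnSeries.order_le_of_coeff_ne_zero ho
  rcases lt_or_eq_of_le h1 with h | h
  · exact absurd ((HahnSeries.coeff_order_eq_zero.not.mpr hx)) (not_not.mpr (hb _ h))
  · exact h

lemma lc_eq {x : LaurentSeries F} (hx : x ≠ 0) :
    x.leadingCoeff = x.coeff x.order := by
  rw [HahnSeries.leadingCoeff_eq]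


lemma sum_coeff {ι : Type*} (s : Finset ι) (f : ι → LaurentSeries F) (i : ℤ) :
    (∑ e ∈ s, f e).coeff i = ∑ e ∈ s, (f e).coeff i := by
  classical
  induction s using Finset.induction with
  | empty => simp
  | insert _ _ h ih => rw [Finset.sum_insert h, Finset.sum_insert h, HahnSeries.coeff_add, ih]

lemma coeff_order_pow {x : LaurentSeries F} (hx : x ≠ 0) (k : ℕ) :
    (x ^ k).coeff ((k : ℤ) * x.order) = (x.coeff x.order) ^ k := by
  induction k with
  | zero => simp
  | succ k ih =>
    have ho : (x ^ k).order = (k : ℤ) * x.order := by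
      rw [HahnSeries.order_pow, nsmul_eq_mul]
    have h1 : ((k : ℤ) + 1) * x.order = (x ^ k).order + x.order := by rw [ho]; ring
    push_cast
    rw [h1, pow_succ, HahnSeries.coeff_mul_order_add_order, lc_eq (pow_ne_zero _ hx), lc_eq hx,
      ho, ih, pow_succ]

lemma single_pow (a : ℤ) (r : F) (k : ℕ) :
    (HahnSeries.single a r) ^ k = HahnSeries.single ((k : ℤ) * a) (r ^ k) := by
  induction k with
  | zero =>
    simp only [pow_zero, Nat.cast_zero, zero_mul]
    rw [← HahnSeries.C_apply, HahnSeries.C_one]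
  | succ k ih =>
    rw [pow_succ, ih, HahnSeries.single_mul_single, pow_succ]
    congr 1
    push_cast
    ring

variable (p : ℕ) [Fact p.Prime] [CharP F p]

lemma charP_LS : CharP (LaurentSeries F) p :=
  charP_of_injective_ringHom HahnSeries.C_injective p

lemma hp2 : (2 : ℤ) ≤ (p : ℤ) := by exact_mod_cast (Fact.out : p.Prime).two_le

/-- Master coefficient lemma for `p`-th powers of Laurent series in char `p`. -/
lemma coeff_pow_p (x : LaurentSeries F) (j : ℤ) :
    (x ^ p).coeff j = if (p : ℤ) ∣ j then (x.coeff (j / p)) ^ p else 0 := by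
  classical
  haveI := charP_LS (F := F) p
  have hp0 : (0 : ℤ) < (p : ℤ) := by linarith [hp2 p]
  rcases eq_or_ne x 0 with rfl | hx
  · rw [zero_pow (Fact.out : p.Prime).ne_zero]
    simp [zero_pow (Fact.out : p.Prime).ne_zero]
  set v : ℤ := x.order with hv
  set B : ℤ := max (j - ((p : ℤ) - 1) * v + 1) (v + 1) with hB
  have hBv : v + 1 ≤ B := le_max_right _ _
  have hBj : j - ((p : ℤ) - 1) * v + 1 ≤ B := le_max_left _ _
  set S : Finset ℤ := (Finset.Icc v (B - 1)).filter (fun e => x.coeff e ≠ 0) with hS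
  set x₁ : LaurentSeries F := ∑ e ∈ S, HahnSeries.single e (x.coeff e) with hx₁
  set x₂ : LaurentSeries F := x - x₁ with hx₂
  have hco1 : ∀ i : ℤ, x₁.coeff i = if i ∈ S then x.coeff i else 0 := by
    intro i
    rw [hx₁, sum_coeff]
    simp only [HahnSeries.coeff_single]
    by_cases hiS : i ∈ S
    · rw [if_pos hiS]
      exact (Finset.sum_eq_single_of_mem i hiS
        (fun b _ hb => if_neg (fun hc : i = b => hb hc.symm))).trans (if_pos rfl)
    · rw [if_neg hiS]
      exact Finset.sum_eq_zero (fun b hb => if_neg (fun hc => hiS (by rw [hc]; exact hb)))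
  have hco2 : ∀ i : ℤ, i < B → x₂.coeff i = 0 := by
    intro i hi
    rw [hx₂, HahnSeries.coeff_sub, hco1]
    by_cases hmem : i ∈ S
    · simp [hmem]
    · simp only [hmem, if_false, sub_zero]
      rcases lt_or_ge i v with h | h
      · exact HahnSeries.coeff_eq_zero_of_lt_order h
      · by_contra hne
        exact hmem (Finset.mem_filter.mpr ⟨Finset.mem_Icc.mpr ⟨h, by omega⟩, hne⟩)
  have hx12 : x = x₁ + x₂ := by rw [hx₂]; ring
  have hpow : x ^ p = x₁ ^ p + x₂ ^ p := by rw [hx12, add_pow_char _ _ p]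
  have hc2 : (x₂ ^ p).coeff j = 0 := by
    rcases eq_or_ne x₂ 0 with h | h
    · rw [h, zero_pow (Fact.out : p.Prime).ne_zero]; simp
    · have hord : B ≤ x₂.order := by
        by_contra hlt
        push_neg at hlt
        exact HahnSeries.coeff_order_eq_zero.not.mpr h (hco2 _ hlt)
      have : j < (x₂ ^ p).order := by
        rw [HahnSeries.order_pow, nsmul_eq_mul]
        have h1 : (p : ℤ) * B ≤ (p : ℤ) * x₂.order :=
          mul_le_mul_of_nonneg_left hord (by linarith)
        have h2 : j < (p : ℤ) * B := by
          have : ((p : ℤ) - 1) * v ≤ ((p : ℤ) - 1) * B := by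
            apply mul_le_mul_of_nonneg_left (by linarith) (by linarith)
          nlinarith
        linarith
      exact HahnSeries.coeff_eq_zero_of_lt_order this
  have hx1pow : x₁ ^ p = ∑ e ∈ S, HahnSeries.single ((p : ℤ) * e) ((x.coeff e) ^ p) := by
    rw [hx₁, sum_pow_char p]
    exact Finset.sum_congr rfl (fun e _ => single_pow e (x.coeff e) p)
  have hc1 : (x₁ ^ p).coeff j = if (p : ℤ) ∣ j then (x.coeff (j / p)) ^ p else 0 := by
    rw [hx1pow, sum_coeff]
    by_cases hdvd : (p : ℤ) ∣ j
    · obtain ⟨i, rfl⟩ := hdvd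
      have hj : ((p:ℤ) * i) / p = i := Int.mul_ediv_cancel_left _ (by linarith)
      rw [if_pos ⟨i, rfl⟩, hj]
      have heq : ∀ e ∈ S, (HahnSeries.single ((p:ℤ)*e) ((x.coeff e)^p)).coeff ((p:ℤ)*i)
          = if e = i then (x.coeff e) ^ p else 0 := by
        intro e _
        rw [HahnSeries.coeff_single]
        by_cases h : e = i
        · simp [h]
        · rw [if_neg (fun hc => h (by
            have := mul_left_cancel₀ (a := (p:ℤ)) (by linarith) hc
            omega)), if_neg h]
      rw [Finset.sum_congr rfl heq, Finset.sum_ite_eq' S i (fun e => (x.coeff e)^p)]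
      by_cases hmem : i ∈ S
      · simp [hmem]
      · rw [if_neg hmem]
        have : x.coeff i = 0 := by
          rcases lt_or_ge i v with h | h
          · exact HahnSeries.coeff_eq_zero_of_lt_order h
          · by_contra hne
            apply hmem
            refine Finset.mem_filter.mpr ⟨Finset.mem_Icc.mpr ⟨h, ?_⟩, hne⟩
            have h1 : ((p:ℤ) - 1) * v ≤ ((p:ℤ) - 1) * i :=
              mul_le_mul_of_nonneg_left h (by linarith)
            have h2 : (p:ℤ) * i - ((p:ℤ)-1) * v + 1 ≤ B := hBj
            nlinarith
        rw [this, zero_pow (Fact.out : p.Prime).ne_zero]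
    · rw [if_neg hdvd]
      apply Finset.sum_eq_zero
      intro e _
      rw [HahnSeries.coeff_single, if_neg (fun hc => hdvd (by rw [hc]; exact ⟨e, rfl⟩))]
  rw [hpow, HahnSeries.coeff_add, hc1, hc2, add_zero]

lemma coeff_pow_p_not_dvd (x : LaurentSeries F) {j : ℤ} (h : ¬ (p : ℤ) ∣ j) :
    (x ^ p).coeff j = 0 := by rw [coeff_pow_p p x j, if_neg h]

lemma coeff_pow_p_mul (x : LaurentSeries F) (i : ℤ) :
    (x ^ p).coeff ((p : ℤ) * i) = (x.coeff i) ^ p := by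
  have hp0 : (p : ℤ) ≠ 0 := by linarith [hp2 p]
  rw [coeff_pow_p p x _, if_pos ⟨i, rfl⟩, Int.mul_ediv_cancel_left _ hp0]

/-- A Laurent series whose coefficients vanish at all indices not divisible by `p`
is a `p`-th power (over a finite field). -/
lemma exists_pth_root [Fintype F] (x : LaurentSeries F)
    (h : ∀ i : ℤ, ¬ (p : ℤ) ∣ i → x.coeff i = 0) :
    ∃ y : LaurentSeries F, x = y ^ p := by
  classical
  have hp0 : (0 : ℤ) < (p : ℤ) := by linarith [hp2 p]
  set g : F → F := fun c => (frobeniusEquiv F p).symm c with hg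
  have hgpow : ∀ c : F, (g c) ^ p = c := by
    intro c
    have := (frobeniusEquiv F p).apply_symm_apply c
    rwa [frobeniusEquiv_apply, frobenius_def] at this
  set f : ℤ → F := fun i => g (x.coeff (p * i)) with hf
  have hsupp : Function.support f ⊆ (fun n : ℤ => n / p) '' Function.support x.coeff := by
    intro i hi
    have h1 : x.coeff (p * i) ≠ 0 := by
      intro hc
      apply hi
      rw [hf]; simp only [hc]
      simp [hg, map_zero]
    exact ⟨p * i, h1, Int.mul_ediv_cancel_left _ (by linarith)⟩
  have hpwo : (Function.support f).IsPWO :=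
    (x.isPWO_support.image_of_monotone (fun a b hab => Int.ediv_le_ediv hp0 hab)).mono hsupp
  refine ⟨⟨f, hpwo⟩, ?_⟩
  ext j
  by_cases hdvd : (p : ℤ) ∣ j
  · obtain ⟨i, rfl⟩ := hdvd
    rw [coeff_pow_p_mul p]
    show x.coeff ((p:ℤ) * i) = (f i) ^ p
    rw [hf, hgpow]
  · rw [h j hdvd, coeff_pow_p_not_dvd p _ hdvd]

/-- Artin–Schreier chains: `x^(p^k) - x` is always in the image of `℘`. -/
lemma exists_chain (x : LaurentSeries F) (k : ℕ) :
    ∃ a : LaurentSeries F, x ^ (p ^ k) - x = a ^ p - a := by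
  haveI := charP_LS (F := F) p
  refine ⟨∑ j ∈ Finset.range k, x ^ (p ^ j), ?_⟩
  rw [sum_pow_char p, ← Finset.sum_sub_distrib]
  have : ∀ j ∈ Finset.range k, (x ^ p ^ j) ^ p - x ^ p ^ j
      = (fun j => x ^ (p ^ j)) (j + 1) - (fun j => x ^ (p ^ j)) j := by
    intro j _
    simp only [← pow_mul, ← pow_succ]
  rw [Finset.sum_congr rfl this, Finset.sum_range_sub (fun j => x ^ (p ^ j))]
  simp

/-- Structure of coefficients of `β ^ W` at indices not divisible by `p`. -/
lemma beta_pow_coeff [Fintype F] {β : LaurentSeries F} (hβ : β ≠ 0) {C D : ℤ}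
    (hord : β.order = -C) (hpC : (p : ℤ) ∣ C) (hDne : β.coeff D ≠ 0) (hpD : ¬ (p : ℤ) ∣ D)
    (hDmin : ∀ i : ℤ, ¬ (p : ℤ) ∣ i → i < D → β.coeff i = 0)
    (W : ℕ) (hW : ¬ p ∣ W) :
    ((β ^ W).coeff (D - ((W : ℤ) - 1) * C) ≠ 0) ∧
    (∀ i : ℤ, ¬ (p : ℤ) ∣ i → i < D - ((W : ℤ) - 1) * C → (β ^ W).coeff i = 0) := by
  classical
  have hW0 : W ≠ 0 := fun h => hW (h ▸ dvd_zero p)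
  have hW1 : 1 ≤ W := Nat.one_le_iff_ne_zero.mpr hW0
  -- the split β = R + P
  set R : LaurentSeries F := ⟨fun i => if (p : ℤ) ∣ i then 0 else β.coeff i, by
    apply β.isPWO_support'.mono
    intro i hi
    simp only [Function.mem_support] at hi ⊢
    by_cases h : (p : ℤ) ∣ i
    · exact absurd (if_pos h) hi
    · rw [if_neg h] at hi; exact hi⟩ with hR
  have hRco : ∀ i : ℤ, R.coeff i = if (p : ℤ) ∣ i then 0 else β.coeff i := fun i => rfl
  set P : LaurentSeries F := β - R with hP
  have hPco : ∀ i : ℤ, P.coeff i = if (p : ℤ) ∣ i then β.coeff i else 0 := by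
    intro i
    rw [hP, HahnSeries.coeff_sub, hRco]
    by_cases h : (p : ℤ) ∣ i <;> simp [h]
  have hβPR : β = R + P := by rw [hP]; ring
  -- facts about R
  have hRD : R.coeff D = β.coeff D := by rw [hRco, if_neg hpD]
  have hRne : R ≠ 0 := fun h => hDne (by rw [← hRD, h]; simp)
  have hRord : R.order = D := by
    apply order_eq_of_coeff (by rw [hRD]; exact hDne)
    intro i hi
    rw [hRco]
    by_cases h : (p : ℤ) ∣ i
    · simp [h]
    · rw [if_neg h]; exact hDmin i h hi
  -- facts about P
  have hpc' : (p : ℤ) ∣ -C := Dvd.dvd.neg_right hpC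
  have hPC : P.coeff (-C) = β.coeff (-C) := by rw [hPco, if_pos hpc']
  have hβC : β.coeff (-C) ≠ 0 := by
    have := HahnSeries.coeff_order_eq_zero.not.mpr hβ
    rwa [hord] at this
  have hPne : P ≠ 0 := fun h => hβC (by rw [← hPC, h]; simp)
  have hPord : P.order = -C := by
    apply order_eq_of_coeff (by rw [hPC]; exact hβC)
    intro i hi
    rw [hPco]
    have : β.coeff i = 0 := HahnSeries.coeff_eq_zero_of_lt_order (by rw [hord]; exact hi)
    simp [this]
  -- P is a p-th power
  obtain ⟨Q, hQ⟩ := exists_pth_root p P (fun i hi => by rw [hPco, if_neg hi])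
  have hPk : ∀ (k : ℕ) (i : ℤ), ¬ (p : ℤ) ∣ i → (P ^ k).coeff i = 0 := by
    intro k i hi
    rw [hQ, ← pow_mul, mul_comm p k, pow_mul]
    exact coeff_pow_p_not_dvd p _ hi
  have hCD : -C < D := by
    have hle : -C ≤ D := by rw [← hord]; exact HahnSeries.order_le_of_coeff_ne_zero hDne
    rcases lt_or_eq_of_le hle with h | h
    · exact h
    · rw [← h] at hpD; exact absurd hpc' hpD
  set e : ℤ := D - ((W : ℤ) - 1) * C with he
  have hpe : ¬ (p : ℤ) ∣ e := by
    intro hc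
    apply hpD
    have : (p : ℤ) ∣ ((W : ℤ) - 1) * C := Dvd.dvd.mul_left hpC _
    have := dvd_add hc this
    simpa [he] using this
  -- the binomial expansion
  have hexp : β ^ W = ∑ k ∈ Finset.range (W + 1),
      R ^ k * P ^ (W - k) * ((W.choose k : ℕ) : LaurentSeries F) := by
    rw [hβPR]; exact add_pow R P W
  -- coefficient of each term
  have hterm : ∀ (k : ℕ) (i : ℤ),
      (R ^ k * P ^ (W - k) * ((W.choose k : ℕ) : LaurentSeries F)).coeff i
      = (R ^ k * P ^ (W - k)).coeff i * ((W.choose k : ℕ) : F) := by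
    intro k i
    have : ((W.choose k : ℕ) : LaurentSeries F) = HahnSeries.single (0 : ℤ) ((W.choose k : ℕ) : F) := by
      rw [← HahnSeries.C_apply, map_natCast]
    rw [this, HahnSeries.coeff_mul_single_zero]
  have hordRP : ∀ k : ℕ, k ≤ W → (R ^ k * P ^ (W - k)).order
      = (k : ℤ) * D + ((W : ℤ) - (k : ℤ)) * (-C) := by
    intro k hk
    rw [HahnSeries.order_mul (pow_ne_zero _ hRne) (pow_ne_zero _ hPne),
      HahnSeries.order_pow, HahnSeries.order_pow, hRord, hPord, nsmul_eq_mul, nsmul_eq_mul]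
    push_cast [Nat.cast_sub hk]
    ring
  -- orders of the terms for k ≥ 2
  have hbig : ∀ k : ℕ, 2 ≤ k → k ≤ W → ∀ i : ℤ, i ≤ e →
      (R ^ k * P ^ (W - k)).coeff i = 0 := by
    intro k h2 hk i hi
    apply HahnSeries.coeff_eq_zero_of_lt_order
    rw [hordRP k hk]
    have hkk : (2 : ℤ) ≤ (k : ℤ) := by exact_mod_cast h2
    nlinarith [hCD]
  have hone : (R ^ 1 * P ^ (W - 1)).order = e := by
    rw [hordRP 1 hW1, he]
    push_cast
    ring
  have hlcP : (P ^ (W - 1)).coeff ((P ^ (W - 1)).order) ≠ 0 := by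
    rw [HahnSeries.order_pow, nsmul_eq_mul, coeff_order_pow hPne, hPord, hPC]
    exact pow_ne_zero _ hβC
  have hRP1 : (R ^ 1 * P ^ (W - 1)).coeff e ≠ 0 := by
    have h1 : (R ^ 1).order + (P ^ (W - 1)).order = e := by
      rw [pow_one, hRord, HahnSeries.order_pow, nsmul_eq_mul, hPord, Nat.cast_sub hW1, he]
      push_cast
      ring
    have h2 := HahnSeries.coeff_mul_order_add_order (R ^ 1) (P ^ (W - 1))
    rw [h1] at h2
    rw [h2, lc_eq (pow_ne_zero _ hRne), lc_eq (pow_ne_zero _ hPne)]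
    apply mul_ne_zero
    · rw [pow_one, hRord, hRD]
      exact hDne
    · exact hlcP
  constructor
  · -- nonvanishing at e
    rw [hexp]
    rw [sum_coeff]
    rw [Finset.sum_eq_single_of_mem 1 (Finset.mem_range.mpr (by omega))]
    · rw [hterm, Nat.choose_one_right]
      apply mul_ne_zero hRP1
      rw [Ne, CharP.cast_eq_zero_iff F p W]
      exact hW
    · intro k hk hk1
      rw [hterm]
      rcases Nat.lt_or_ge k 2 with h | h
      · interval_cases k
        · rw [pow_zero, one_mul, Nat.sub_zero, hPk W e hpe, zero_mul]
        · exact absurd rfl hk1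
      · rw [hbig k h (Nat.lt_succ_iff.mp (Finset.mem_range.mp hk)) e le_rfl, zero_mul]
  · -- vanishing below e at non-divisible indices
    intro i hpi hie
    rw [hexp]
    rw [sum_coeff]
    apply Finset.sum_eq_zero
    intro k hk
    rw [hterm]
    rcases Nat.lt_or_ge k 2 with h | h
    · interval_cases k
      · rw [pow_zero, one_mul, Nat.sub_zero, hPk W i hpi, zero_mul]
      · rw [show (R ^ 1 * P ^ (W-1)).coeff i = 0 from
          HahnSeries.coeff_eq_zero_of_lt_order (by rw [hone]; exact hie), zero_mul]
    · rw [hbig k h (Nat.lt_succ_iff.mp (Finset.mem_range.mp hk)) i (le_of_lt hie), zero_mul]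

/-- Artin–Schreier vanishing: if `y = a^p - a` has negative order, then the coefficients of `y`
at indices `i` with `p ∤ i` and `p·i < order y` vanish. -/
lemma AS_coeff (a y : LaurentSeries F) (h : y = a ^ p - a) (hy : y.order < 0) :
    ∀ i : ℤ, ¬ (p : ℤ) ∣ i → (p : ℤ) * i < y.order → y.coeff i = 0 := by
  have hyne : y ≠ 0 := fun hc => by rw [hc, HahnSeries.order_zero] at hy; exact absurd hy (lt_irrefl 0)
  have hane : a ≠ 0 := fun hc => hyne (by rw [h, hc, zero_pow (Fact.out : p.Prime).ne_zero, sub_zero])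
  have hp2' : (2 : ℤ) ≤ (p : ℤ) := hp2 p
  have hpa : (a ^ p).order = (p : ℤ) * a.order := by
    rw [HahnSeries.order_pow, nsmul_eq_mul]
  have hcc : ∀ i : ℤ, y.coeff i = (a ^ p).coeff i - a.coeff i := fun i => by
    rw [h, HahnSeries.coeff_sub]
  have haneg : a.order < 0 := by
    by_contra hc
    push_neg at hc
    apply HahnSeries.coeff_order_eq_zero.not.mpr hyne
    rw [hcc,
      HahnSeries.coeff_eq_zero_of_lt_order (x := a ^ p) (by rw [hpa]; nlinarith),
      HahnSeries.coeff_eq_zero_of_lt_order (x := a) (by linarith), sub_zero]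
  have hlt : (p : ℤ) * a.order < a.order := by nlinarith
  have hyo : y.order = (p : ℤ) * a.order := by
    apply order_eq_of_coeff
    · rw [hcc, HahnSeries.coeff_eq_zero_of_lt_order (x := a) hlt, sub_zero, ← hpa]
      exact HahnSeries.coeff_order_eq_zero.not.mpr (pow_ne_zero _ hane)
    · intro i hi
      rw [hcc,
        HahnSeries.coeff_eq_zero_of_lt_order (x := a ^ p) (by rw [hpa]; exact hi),
        HahnSeries.coeff_eq_zero_of_lt_order (x := a) (by linarith), sub_zero]
  intro i hpi hilt
  rw [hyo] at hilt
  have hia : i < a.order := by nlinarith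
  rw [hcc, coeff_pow_p_not_dvd p a hpi,
    HahnSeries.coeff_eq_zero_of_lt_order hia, sub_zero]

/-- The key unsolvability lemma. -/
lemma no_solution [Fintype F] {β : LaurentSeries F} (hβ : β ≠ 0) {C D : ℤ}
    (hord : β.order = -C) (hCpos : 0 < C) (hpC : (p : ℤ) ∣ C)
    (hDne : β.coeff D ≠ 0) (hpD : ¬ (p : ℤ) ∣ D)
    (hDmin : ∀ i : ℤ, ¬ (p : ℤ) ∣ i → i < D → β.coeff i = 0)
    {N : ℕ} (hNpos : 0 < N) (hDN : D < ((N : ℤ) - 1) * C)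
    {W V : ℕ} (hpW : ¬ p ∣ W) (hpV : ¬ p ∣ V) (hVN : N ≤ V) (hWV : V + N ≤ W) :
    ¬ ∃ a : LaurentSeries F, β ^ W - β ^ V = a ^ p - a := by
  rintro ⟨a, ha⟩
  have hp2' : (2 : ℤ) ≤ (p : ℤ) := hp2 p
  have hNz : (1 : ℤ) ≤ (N : ℤ) := by exact_mod_cast hNpos
  have hVz : (N : ℤ) ≤ (V : ℤ) := by exact_mod_cast hVN
  have hWz : (V : ℤ) + (N : ℤ) ≤ (W : ℤ) := by exact_mod_cast hWV
  set y : LaurentSeries F := β ^ W - β ^ V with hy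
  have hordW : (β ^ W).order = -((W : ℤ) * C) := by
    rw [HahnSeries.order_pow, nsmul_eq_mul, hord]; ring
  have hordV : (β ^ V).order = -((V : ℤ) * C) := by
    rw [HahnSeries.order_pow, nsmul_eq_mul, hord]; ring
  have hVW : (V : ℤ) * C < (W : ℤ) * C := by nlinarith
  have hyord : y.order = -((W : ℤ) * C) := by
    apply order_eq_of_coeff
    · rw [hy, HahnSeries.coeff_sub,
        HahnSeries.coeff_eq_zero_of_lt_order (x := β ^ V) (by rw [hordV]; linarith), sub_zero,
        ← hordW]
      exact HahnSeries.coeff_order_eq_zero.not.mpr (pow_ne_zero _ hβ)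
    · intro i hi
      rw [hy, HahnSeries.coeff_sub,
        HahnSeries.coeff_eq_zero_of_lt_order (x := β ^ W) (by rw [hordW]; exact hi),
        HahnSeries.coeff_eq_zero_of_lt_order (x := β ^ V) (by rw [hordV]; linarith), sub_zero]
  set e : ℤ := D - ((W : ℤ) - 1) * C with he
  have hWco := beta_pow_coeff p hβ hord hpC hDne hpD hDmin W hpW
  have hVco := beta_pow_coeff p hβ hord hpC hDne hpD hDmin V hpV
  have hpe : ¬ (p : ℤ) ∣ e := by
    intro hc
    apply hpD
    have h1 : (p : ℤ) ∣ ((W : ℤ) - 1) * C := Dvd.dvd.mul_left hpC _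
    have := dvd_add hc h1
    simpa [he] using this
  have hye : y.coeff e ≠ 0 := by
    rw [hy, HahnSeries.coeff_sub, hVco.2 e hpe (by nlinarith), sub_zero]
    exact hWco.1
  have hkey : (p : ℤ) * e < -((W : ℤ) * C) := by
    have h1 : (p : ℤ) * D < (p : ℤ) * (((N : ℤ) - 1) * C) :=
      mul_lt_mul_of_pos_left hDN (by linarith)
    have h2 : (W : ℤ) ≤ (p : ℤ) * ((W : ℤ) - (N : ℤ)) := by nlinarith
    have h3 : (W : ℤ) * C ≤ (p : ℤ) * ((W : ℤ) - (N : ℤ)) * C :=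
      mul_le_mul_of_nonneg_right h2 (le_of_lt hCpos)
    have h4 : (p : ℤ) * e = (p : ℤ) * D - (p : ℤ) * ((W : ℤ) - 1) * C := by rw [he]; ring
    nlinarith
  apply hye
  apply AS_coeff p a y ha (by rw [hyord]; nlinarith) e hpe
  rw [hyord]
  exact hkey

end Stmt10Aux

open Stmt10Aux in
/-- For `α` not a `p`-th power with `v_t(α) = C > 0` divisible by `p`,
`D = v̂_t(α⁻¹)`, and `N > D/C + 1` with `p ∤ N`, the relation `n |_p m` is characterized
by the Artin–Schreier equation for `α^{-mN} - α^{-nN}`. -/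
theorem stmt_10 (p : ℕ) [Fact p.Prime] (r : ℕ) (hr : 0 < r)
    (F : Type*) [Field F] [Fintype F] [CharP F p] (hq : Fintype.card F = p ^ r)
    (α : LaurentSeries F) (hpow : ¬ ∃ y : LaurentSeries F, α = y ^ p)
    (C : ℤ) (hC : α.order = C) (hCpos : 0 < C) (hpC : (p : ℤ) ∣ C)
    (D : ℤ) (hD : vhat p α⁻¹ = D)
    (N : ℕ) (hNpos : 0 < N) (hN : (D : ℚ) / (C : ℚ) + 1 < (N : ℚ)) (hpN : ¬ p ∣ N) :
    ∀ m n : ℕ, 0 < m → 0 < n →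
      ((∃ k : ℕ, m = n * p ^ k) ↔
        (n ≤ m ∧ ∃ a : LaurentSeries F,
          α ^ (-((m * N : ℕ) : ℤ)) - α ^ (-((n * N : ℕ) : ℤ)) = a ^ p - a)) := by
  classical
  haveI := charP_LS (F := F) p
  have hp := (Fact.out : p.Prime)
  have hp1 : 1 < p := hp.one_lt
  have hαne : α ≠ 0 := by
    intro hc
    exact hpow ⟨0, by rw [hc, zero_pow hp.ne_zero]⟩
  set β : LaurentSeries F := α⁻¹ with hβdef
  have hβne : β ≠ 0 := inv_ne_zero hαne
  have hβpow : ¬ ∃ y : LaurentSeries F, β = y ^ p := by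
    rintro ⟨y, hy⟩
    exact hpow ⟨y⁻¹, by rw [inv_pow, ← hy, hβdef, inv_inv]⟩
  have hβord : β.order = -C := by
    have h1 : α * β = 1 := mul_inv_cancel₀ hαne
    have h2 := HahnSeries.order_mul hαne hβne
    rw [h1, HahnSeries.order_one, hC] at h2
    linarith
  -- the defining properties of D
  set S : Set ℤ := {i : ℤ | β.coeff i ≠ 0 ∧ ¬ (p : ℤ) ∣ i} with hs
  have hSbdd : BddBelow S := ⟨β.order, fun i hi => HahnSeries.order_le_of_coeff_ne_zero hi.1⟩
  have hSne : S.Nonempty := by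
    by_contra hcne
    rw [Set.not_nonempty_iff_eq_empty] at hcne
    apply hβpow
    apply exists_pth_root p β
    intro i hi
    by_contra hne
    have hmem : i ∈ S := ⟨hne, hi⟩
    rw [hcne] at hmem
    simp at hmem
  have hDS : D ∈ S := by
    rw [← hD]
    exact Int.csInf_mem hSne hSbdd
  have hDne : β.coeff D ≠ 0 := hDS.1
  have hpD : ¬ (p : ℤ) ∣ D := hDS.2
  have hDmin : ∀ i : ℤ, ¬ (p : ℤ) ∣ i → i < D → β.coeff i = 0 := by
    intro i hpi hiD
    by_contra hne
    have : D ≤ i := hD ▸ csInf_le hSbdd (Set.mem_setOf.mpr ⟨hne, hpi⟩)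
    omega
  have hDN : D < ((N : ℤ) - 1) * C := by
    have hCQ : (0 : ℚ) < (C : ℚ) := by exact_mod_cast hCpos
    have h1 : (D : ℚ) / (C : ℚ) < (N : ℚ) - 1 := by linarith
    have h2 : (D : ℚ) < ((N : ℚ) - 1) * (C : ℚ) := by
      rw [div_lt_iff₀ hCQ] at h1
      linarith
    exact_mod_cast h2
  -- rewriting the α-powers
  have hαpow : ∀ j : ℕ, α ^ (-(j : ℤ)) = β ^ j := by
    intro j
    rw [zpow_neg, zpow_natCast, hβdef, inv_pow]
  intro m n hm hn
  constructor
  · -- forward direction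
    rintro ⟨k, rfl⟩
    refine ⟨Nat.le_mul_of_pos_right n (pow_pos hp.pos k), ?_⟩
    rw [hαpow (n * p ^ k * N), hαpow (n * N)]
    obtain ⟨a, ha⟩ := exists_chain p (β ^ (n * N)) k
    refine ⟨a, ?_⟩
    rw [← ha, ← pow_mul]
    congr 1
    ring
  · -- backward direction
    rintro ⟨hnm, a, ha⟩
    rw [hαpow (m * N), hαpow (n * N)] at ha
    set s : ℕ := m.factorization p with hsdef
    set u : ℕ := n.factorization p with hudef
    set m' : ℕ := m / p ^ s with hm'def
    set n' : ℕ := n / p ^ u with hn'def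
    have hmm : p ^ s * m' = m := Nat.ordProj_mul_ordCompl_eq_self m p
    have hnn : p ^ u * n' = n := Nat.ordProj_mul_ordCompl_eq_self n p
    have hpm' : ¬ p ∣ m' := Nat.not_dvd_ordCompl hp hm.ne'
    have hpn' : ¬ p ∣ n' := Nat.not_dvd_ordCompl hp hn.ne'
    have hm'pos : 0 < m' := Nat.pos_of_ne_zero (fun h => by simp [h] at hmm; omega)
    have hn'pos : 0 < n' := Nat.pos_of_ne_zero (fun h => by simp [h] at hnn; omega)
    by_cases heq : m' = n'
    · -- then the relation holds
      have hus : u ≤ s := by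
        have h1 : p ^ u * n' ≤ p ^ s * n' := by
          rw [hnn]
          calc n ≤ m := hnm
            _ = p ^ s * m' := hmm.symm
            _ = p ^ s * n' := by rw [heq]
        have h2 : p ^ u ≤ p ^ s := Nat.le_of_mul_le_mul_right h1 hn'pos
        exact (Nat.pow_le_pow_iff_right hp1).mp h2
      refine ⟨s - u, ?_⟩
      have hsum : u + (s - u) = s := by omega
      rw [← hmm, ← hnn, heq, mul_comm (p ^ u) n', mul_assoc, ← _root_.pow_add, hsum, mul_comm]
    · -- derive a contradiction
      exfalso
      -- reduce m to m'
      have hchain : ∀ (j : ℕ) (t : ℕ), ∃ b : LaurentSeries F,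
          β ^ (j * p ^ t * N) - β ^ (j * N) = b ^ p - b := by
        intro j t
        obtain ⟨b, hb⟩ := exists_chain p (β ^ (j * N)) t
        refine ⟨b, ?_⟩
        rw [← hb, ← pow_mul]
        congr 1
        ring
      obtain ⟨b₁, hb₁⟩ := hchain m' s
      obtain ⟨b₂, hb₂⟩ := hchain n' u
      rw [show m' * p ^ s = m from by rw [← hmm]; ring] at hb₁
      rw [show n' * p ^ u = n from by rw [← hnn]; ring] at hb₂
      set a' : LaurentSeries F := a - b₁ + b₂ with ha'def
      have ha' : β ^ (m' * N) - β ^ (n' * N) = a' ^ p - a' := by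
        rw [ha'def, add_pow_char _ _ p, sub_pow_char _ _]
        have : β ^ (m' * N) - β ^ (n' * N)
            = (β ^ (m * N) - β ^ (n * N)) - (β ^ (m * N) - β ^ (m' * N))
              + (β ^ (n * N) - β ^ (n' * N)) := by ring
        rw [this, ha, hb₁, hb₂]
        ring
      have hNmul : ∀ j : ℕ, 0 < j → ¬ p ∣ j → ¬ p ∣ (j * N) := by
        intro j _ hj hc
        rcases (Nat.Prime.dvd_mul hp).mp hc with h | h
        exacts [hj h, hpN h]
      rcases lt_or_gt_of_ne heq with hlt | hgt
      · -- m' < n' : use W = n' * N, V = m' * N, witness -a'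
        have hneg : β ^ (n' * N) - β ^ (m' * N) = (-a') ^ p - (-a') := by
          have hodd : (-a') ^ p = -(a' ^ p) := by
            have hsp := sub_pow_char (0 : LaurentSeries F) a' (p := p)
            simpa [zero_pow hp.ne_zero] using hsp
          rw [hodd]
          linear_combination -ha'
        exact no_solution p hβne hβord hCpos hpC hDne hpD hDmin hNpos hDN
          (hNmul n' hn'pos hpn') (hNmul m' hm'pos hpm')
          (Nat.le_mul_of_pos_left N hm'pos)
          (by nlinarith) ⟨-a', hneg⟩
      · exact no_solution p hβne hβord hCpos hpC hDne hpD hDmin hNpos hDN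
          (hNmul m' hm'pos hpm') (hNmul n' hn'pos hpn')
          (Nat.le_mul_of_pos_left N hn'pos)
          (by nlinarith) ⟨a', ha'⟩
end

section
/- Let α ∈ F_q((t)) with v_t(α) > 0, and suppose m ≥ n ≥ 1 with m = m₀·p^{v_p(m)}, n = n₀·p^{v_p(n)} where p ∤ m₀, p ∤ n₀. If there exists a ∈ F_q((t)) with α^{-m} - α^{-n} = a^p - a, then there exists d ∈ F_q((t)) with α^{-m₀} - α^{-n₀} = d^p - d. -/
private lemma stmt15_aux {K : Type*} [Field K] (p : ℕ) [Fact p.Prime] [CharP K p]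
    (α : K) (k j : ℕ) :
    ∃ x : K, α ^ (-((k * p ^ j : ℕ) : ℤ)) - α ^ (-(k : ℤ)) = x ^ p - x := by
  induction j with
  | zero =>
    refine ⟨0, ?_⟩
    simp [(Fact.out : p.Prime).ne_zero, zero_pow]
  | succ j ih =>
    obtain ⟨x, hx⟩ := ih
    refine ⟨α ^ (-((k * p ^ j : ℕ) : ℤ)) + x, ?_⟩
    have h1 : α ^ (-((k * p ^ (j + 1) : ℕ) : ℤ)) = (α ^ (-((k * p ^ j : ℕ) : ℤ))) ^ p := by
      rw [← zpow_natCast _ p, ← zpow_mul]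
      congr 1
      push_cast
      ring
    rw [h1, add_pow_char]
    linear_combination hx

/-- Stripping the `p`-parts: if `α^{-m} - α^{-n}` is an Artin–Schreier
value, `m = m₀·p^a`, `n = n₀·p^b` with `p ∤ m₀`, `p ∤ n₀`, then `α^{-m₀} - α^{-n₀}` is
also an Artin–Schreier value. -/
theorem stmt_15 (p : ℕ) [Fact p.Prime] (r : ℕ) (hr : 0 < r)
    (F : Type*) [Field F] [Fintype F] [CharP F p] (hq : Fintype.card F = p ^ r)
    (α : LaurentSeries F) (hα : 0 < α.order)
    (m n m₀ n₀ a b : ℕ) (hn : 1 ≤ n) (hnm : n ≤ m)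
    (hm : m = m₀ * p ^ a) (hn' : n = n₀ * p ^ b) (hpm : ¬ p ∣ m₀) (hpn : ¬ p ∣ n₀)
    (hAS : ∃ x : LaurentSeries F, α ^ (-(m : ℤ)) - α ^ (-(n : ℤ)) = x ^ p - x) :
    ∃ d : LaurentSeries F, α ^ (-(m₀ : ℤ)) - α ^ (-(n₀ : ℤ)) = d ^ p - d := by
  haveI : CharP (LaurentSeries F) p :=
    charP_of_injective_ringHom (HahnSeries.C_injective (Γ := ℤ) (R := F)) p
  obtain ⟨x, hx⟩ := hAS
  obtain ⟨x1, hx1⟩ := stmt15_aux p α m₀ a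
  obtain ⟨x2, hx2⟩ := stmt15_aux p α n₀ b
  rw [← hm] at hx1
  rw [← hn'] at hx2
  refine ⟨x - x1 + x2, ?_⟩
  rw [add_pow_char, sub_pow_char]
  linear_combination hx - hx1 + hx2
end

section
/- Multiplication is existentially definable in the structure (ℕ, 0, 1, +, |_p): there is an existential formula in the language {0, 1, +, |_p} defining the graph of multiplication on ℕ, where n |_p m means m = n·p^k for some k. -/
set_option maxHeartbeats 1000000

open FirstOrder

/-- The language `{0, 1, +, |_p}`: two constant symbols (`0` and `1`), one binary
function symbol (`+`), and one binary relation symbol (`|_p`). -/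
def LangPDiv : FirstOrder.Language where
  Functions
    | 0 => Fin 2
    | 2 => Unit
    | _ => Empty
  Relations
    | 2 => Unit
    | _ => Empty

/-- The structure `(ℕ, 0, 1, +, |_p)`, where `n |_p m` iff `m = n·p^k` for some `k`. -/
def natPDivStructure (p : ℕ) : LangPDiv.Structure ℕ where
  funMap {n} f v :=
    match n, f, v with
    | 0, c, _ => if (show Fin 2 from c) = 0 then 0 else 1
    | 2, _, v => v 0 + v 1
  RelMap {n} R v :=
    match n, R, v with
    | 2, _, v => ∃ k : ℕ, v 1 = v 0 * p ^ k

namespace Stmt16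
open FirstOrder Language

def MP (p a b c s : ℕ) : Prop :=
  (∃ k, b = 1 * p ^ k) ∧
    ((a = 0 ∧ c = 0) ∨
      (((¬a = 0 ∧ ∃ k, c = a * p ^ k) ∧ ∃ k, c + b = (a + 1) * p ^ k) ∧ b + s = c))



theorem MP_mul {p : ℕ} (hp : 2 ≤ p) {a b c s : ℕ} (h : MP p a b c s) : c = a * b := by
  obtain ⟨⟨k, hk⟩, h | ⟨⟨⟨ha, j, hj⟩, i, hi⟩, hs⟩⟩ := h
  · simp [h.1, h.2]
  · rw [one_mul] at hk
    subst hk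
    subst hj
    have ha1 : 1 ≤ a := Nat.one_le_iff_ne_zero.2 ha
    have hi' : a * p ^ j + p ^ k = a * p ^ i + p ^ i := by
      rw [hi]; ring
    rcases lt_trichotomy j i with hji | rfl | hij
    · exfalso
      have h1 : p ^ (j + 1) ≤ p ^ i := Nat.pow_le_pow_right (by omega) hji
      have h2 : p ^ j * 2 ≤ p ^ (j + 1) := by
        rw [pow_succ]; exact Nat.mul_le_mul_left _ hp
      have h4 : a * p ^ (j + 1) ≤ a * p ^ i := Nat.mul_le_mul_left a h1
      have h5 : a * (p ^ j * 2) ≤ a * p ^ (j + 1) := Nat.mul_le_mul_left a h2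
      have h6 : 2 * (a * p ^ j) ≤ a * p ^ i := by
        calc 2 * (a * p ^ j) = a * (p ^ j * 2) := by ring
          _ ≤ a * p ^ (j + 1) := h5
          _ ≤ a * p ^ i := h4
      have h7 : 1 ≤ p ^ i := Nat.one_le_pow _ _ (by omega)
      -- hs : p ^ k + s = a * p ^ j
      linarith
    · have hpk : p ^ k = p ^ j := by linarith
      rw [hpk]
    · exfalso
      have h1 : p ^ (i + 1) ≤ p ^ j := Nat.pow_le_pow_right (by omega) hij
      have h2 : p ^ i * 2 ≤ p ^ (i + 1) := by
        rw [pow_succ]; exact Nat.mul_le_mul_left _ hp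
      have h6 : 2 * (a * p ^ i) ≤ a * p ^ j := by
        calc 2 * (a * p ^ i) = a * (p ^ i * 2) := by ring
          _ ≤ a * p ^ (i + 1) := Nat.mul_le_mul_left a h2
          _ ≤ a * p ^ j := Nat.mul_le_mul_left a h1
      have h7 : 1 ≤ p ^ i := Nat.one_le_pow _ _ (by omega)
      have h8 : p ^ i ≤ a * p ^ i := Nat.le_mul_of_pos_left _ (by omega)
      have h9 : 1 ≤ p ^ k := Nat.one_le_pow _ _ (by omega)
      linarith

theorem MP_intro {p : ℕ} (a : ℕ) {b : ℕ} (hb : ∃ k, b = p ^ k) :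
    ∃ s, MP p a b (a * b) s := by
  obtain ⟨k, rfl⟩ := hb
  by_cases ha : a = 0
  · exact ⟨0, ⟨k, (one_mul _).symm⟩, Or.inl ⟨ha, by simp [ha]⟩⟩
  · have hb1 : p ^ k ≤ a * p ^ k := Nat.le_mul_of_pos_left _ (Nat.pos_of_ne_zero ha)
    exact ⟨a * p ^ k - p ^ k, ⟨k, (one_mul _).symm⟩,
      Or.inr ⟨⟨⟨ha, ⟨k, rfl⟩⟩, ⟨k, by ring⟩⟩, by omega⟩⟩

/-- geometric sum helpers -/
theorem geo (u : ℕ) : ∀ n : ℕ,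
    u ^ n + (∑ i ∈ Finset.range n, u ^ i) = (∑ i ∈ Finset.range n, u ^ i) * u + 1 := by
  intro n
  induction n with
  | zero => simp
  | succ n ih =>
    rw [Finset.sum_range_succ]
    have : u ^ (n + 1) = u ^ n * u := by ring
    nlinarith [ih]

theorem geo2 (u : ℕ) : ∀ n : ℕ,
    (∑ i ∈ Finset.range n, u ^ i) + (∑ i ∈ Finset.range n, ∑ j ∈ Finset.range i, u ^ j)
      = n + (∑ i ∈ Finset.range n, ∑ j ∈ Finset.range i, u ^ j) * u := by
  intro n
  induction n with
  | zero => simp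
  | succ n ih =>
    rw [Finset.sum_range_succ, Finset.sum_range_succ (f := fun i => ∑ j ∈ Finset.range i, u ^ j)]
    have hg := geo u n
    nlinarith [ih]

/-- The arithmetic core: the existential multilinear system defines multiplication. -/
theorem core {p : ℕ} (hp : 2 ≤ p) (x y z : ℕ) :
    (∃ N M₁ W A T S Q B C D E G r₁ r₂ f s₁ s₂ s₃ s₄ s₅ s₆ : ℕ,
      MP p N N M₁ s₁ ∧ MP p A M₁ B s₂ ∧ MP p S M₁ C s₃ ∧ MP p x W D s₄ ∧
      MP p Q M₁ E s₅ ∧ MP p T M₁ G s₆ ∧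
      W + A = p * B + 1 ∧ A + T = y + p * G ∧ p * C + x = D + S ∧
      S + Q = p * E + z ∧ x + r₁ + 1 = N ∧ y + r₂ + 1 = N ∧ z + f + (1 + 1) = p * M₁)
    ↔ x * y = z := by
  constructor
  · rintro ⟨N, M₁, W, A, T, S, Q, B, C, D, E, G, r₁, r₂, f, s₁, s₂, s₃, s₄, s₅, s₆,
      m1, m2, m3, m4, m5, m6, e1, e2, e3, e4, e5a, e5b, e6⟩
    -- extract products
    have hM₁ : M₁ = N * N := MP_mul hp m1
    have hB : B = A * M₁ := MP_mul hp m2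
    have hC : C = S * M₁ := MP_mul hp m3
    have hD : D = x * W := MP_mul hp m4
    have hE : E = Q * M₁ := MP_mul hp m5
    have hG : G = T * M₁ := MP_mul hp m6
    obtain ⟨n, hN⟩ := m1.1
    rw [one_mul] at hN
    have hN1 : 1 ≤ N := hN ▸ Nat.one_le_pow _ _ (by omega)
    subst hM₁ hB hC hD hE hG
    -- move to ℤ
    set U : ℤ := (p : ℤ) * ((N : ℤ) * (N : ℤ)) with hU
    have hU2 : 2 ≤ U := by
      have : (1 : ℤ) ≤ (N : ℤ) := by exact_mod_cast hN1
      have : (1 : ℤ) ≤ (N : ℤ) * (N : ℤ) := by nlinarith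
      have hp' : (2 : ℤ) ≤ (p : ℤ) := by exact_mod_cast hp
      nlinarith
    have e1' : (W : ℤ) + A = A * U + 1 := by
      have := e1; zify at this; rw [this]; ring
    have e2' : (A : ℤ) + T = y + T * U := by
      have := e2; zify at this; rw [this]; ring
    have e3' : (S : ℤ) * U + x = x * W + S := by
      have := e3; zify at this
      have h' : (S : ℤ) * U = (p : ℤ) * ((S : ℤ) * ((N : ℤ) * (N : ℤ))) := by rw [hU]; ring
      rw [h']; linarith
    have e4' : (S : ℤ) + Q = Q * U + z := by
      have := e4; zify at this
      have h' : (Q : ℤ) * U = (p : ℤ) * ((Q : ℤ) * ((N : ℤ) * (N : ℤ))) := by rw [hU]; ring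
      rw [h']; linarith
    have e6' : (z : ℤ) + 2 ≤ U := by
      have := e6; zify at this; rw [hU]; push_cast at this ⊢; linarith
    have hxN : (x : ℤ) + 1 ≤ N := by exact_mod_cast (by omega : x + 1 ≤ N)
    have hyN : (y : ℤ) + 1 ≤ N := by exact_mod_cast (by omega : y + 1 ≤ N)
    -- derive S = x * A
    have hW : (W : ℤ) = A * (U - 1) + 1 := by linarith
    have hS : (S : ℤ) = x * A := by
      have h1 : (S : ℤ) * (U - 1) = (x : ℤ) * A * (U - 1) := by
        have : (S : ℤ) * U + x = x * (A * (U - 1) + 1) + S := by rw [← hW]; exact e3'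
        ring_nf at this ⊢
        linarith
      have h2 : (U : ℤ) - 1 ≠ 0 := by omega
      exact mul_right_cancel₀ h2 h1
    have hz : (z : ℤ) - x * y = (x * T - Q) * (U - 1) := by
      have hA : (A : ℤ) = y + T * (U - 1) := by linarith
      have hz' : (z : ℤ) = S - Q * (U - 1) := by linarith
      rw [hz', hS, hA]; ring
    -- bounds
    have hxy : (x : ℤ) * y ≤ U - 2 := by
      have h1 : (x : ℤ) * y ≤ ((N : ℤ) - 1) * ((N : ℤ) - 1) := by
        have hx0 : (0 : ℤ) ≤ x := Int.ofNat_nonneg x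
        have hy0 : (0 : ℤ) ≤ y := Int.ofNat_nonneg y
        nlinarith
      have hp' : (2 : ℤ) ≤ (p : ℤ) := by exact_mod_cast hp
      have hN' : (1 : ℤ) ≤ (N : ℤ) := by exact_mod_cast hN1
      nlinarith
    have hz2 : (z : ℤ) ≤ U - 2 := by linarith
    have hz0 : (0 : ℤ) ≤ z := Int.ofNat_nonneg z
    have hxy0 : (0 : ℤ) ≤ (x : ℤ) * y := by positivity
    -- conclude δ = 0
    have hδ : (x : ℤ) * T - Q = 0 := by
      rcases lt_trichotomy ((x : ℤ) * T - Q) 0 with hlt | heq | hgt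
      · exfalso
        have h1 : (x : ℤ) * T - Q ≤ -1 := by omega
        have h2 : ((x : ℤ) * T - Q) * (U - 1) ≤ (-1) * (U - 1) :=
          mul_le_mul_of_nonneg_right h1 (by omega)
        linarith
      · exact heq
      · exfalso
        have h1 : (1 : ℤ) ≤ x * T - Q := by omega
        have h2 : (1 : ℤ) * (U - 1) ≤ ((x : ℤ) * T - Q) * (U - 1) :=
          mul_le_mul_of_nonneg_right h1 (by omega)
        linarith
    have : (z : ℤ) = x * y := by rw [hδ] at hz; linarith
    exact_mod_cast this.symm
  · intro hxyz
    set m := max x y + 1 with hm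
    set N := p ^ m with hNdef
    have hx : x < N := by
      have h1 : m < p ^ m := Nat.lt_pow_self (by omega)
      omega
    have hy : y < N := by
      have h1 : m < p ^ m := Nat.lt_pow_self (by omega)
      omega
    have hN1 : 1 ≤ N := Nat.one_le_pow _ _ (by omega)
    set u := p * (N * N) with hu
    have hupow : ∃ k, u = p ^ k := ⟨2 * m + 1, by rw [hu, hNdef]; ring⟩
    set A := ∑ i ∈ Finset.range y, u ^ i with hA
    set T := ∑ i ∈ Finset.range y, ∑ j ∈ Finset.range i, u ^ j with hT
    set W := u ^ y with hW
    have I1 : W + A = A * u + 1 := geo u y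
    have I2 : A + T = y + T * u := geo2 u y
    obtain ⟨s₁, hs₁⟩ := MP_intro (p := p) N ⟨m, hNdef⟩
    obtain ⟨s₂, hs₂⟩ := MP_intro (p := p) A (⟨2 * m, by rw [hNdef]; ring⟩ : ∃ k, N * N = p ^ k)
    obtain ⟨s₃, hs₃⟩ := MP_intro (p := p) (x * A) (⟨2 * m, by rw [hNdef]; ring⟩ : ∃ k, N * N = p ^ k)
    obtain ⟨k₀, hk₀⟩ := hupow
    obtain ⟨s₄, hs₄⟩ := MP_intro (p := p) x (⟨k₀ * y, by rw [hW, hk₀, pow_mul]⟩ : ∃ k, W = p ^ k)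
    obtain ⟨s₅, hs₅⟩ := MP_intro (p := p) (x * T) (⟨2 * m, by rw [hNdef]; ring⟩ : ∃ k, N * N = p ^ k)
    obtain ⟨s₆, hs₆⟩ := MP_intro (p := p) T (⟨2 * m, by rw [hNdef]; ring⟩ : ∃ k, N * N = p ^ k)
    have hz2 : z + (1 + 1) ≤ p * (N * N) := by
      have h1 : (x + 1) * (y + 1) ≤ N * N := Nat.mul_le_mul hx hy
      have h2 : 2 * (N * N) ≤ p * (N * N) := Nat.mul_le_mul_right _ hp
      have h3 : 1 ≤ N * N := Nat.one_le_iff_ne_zero.2 (by positivity)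
      nlinarith
    refine ⟨N, N * N, W, A, T, x * A, x * T, A * (N * N), x * A * (N * N), x * W,
      x * T * (N * N), T * (N * N), N - x - 1, N - y - 1, p * (N * N) - z - 2,
      s₁, s₂, s₃, s₄, s₅, s₆, hs₁, hs₂, hs₃, hs₄, hs₅, hs₆, ?_, ?_, ?_, ?_, ?_, ?_, ?_⟩
    · -- W + A = p * (A * (N*N)) + 1
      have : p * (A * (N * N)) = A * u := by rw [hu]; ring
      rw [this]; exact I1
    · -- A + T = y + p * (T * (N*N))
      have : p * (T * (N * N)) = T * u := by rw [hu]; ring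
      rw [this]; exact I2
    · -- p * (x*A*(N*N)) + x = x*W + x*A
      have h1 : p * (x * A * (N * N)) = x * (A * u) := by rw [hu]; ring
      rw [h1]
      have := I1
      nlinarith [I1]
    · -- x*A + x*T = p * (x*T*(N*N)) + z
      have h1 : p * (x * T * (N * N)) = x * (T * u) := by rw [hu]; ring
      rw [h1, ← hxyz]
      nlinarith [I2]
    · omega
    · omega
    · omega


abbrev T3 := LangPDiv.Term (Fin 3 ⊕ Fin 21)

def f0 : LangPDiv.Functions 0 := by exact (0 : Fin 2)
def f1 : LangPDiv.Functions 0 := by exact (1 : Fin 2)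
def fadd : LangPDiv.Functions 2 := by exact ()
def rdvd : LangPDiv.Relations 2 := by exact ()

def ct0 : T3 := Term.func f0 ![]
def ct1 : T3 := Term.func f1 ![]
def tadd (s t : T3) : T3 := Term.func fadd ![s, t]

def tsm : ℕ → T3 → T3
  | 0, _ => ct0
  | n + 1, t => tadd (tsm n t) t

def fv (i : Fin 3) : T3 := Term.var (Sum.inl i)
def bv (i : Fin 21) : T3 := Term.var (Sum.inr i)

def pdvd (s t : T3) : LangPDiv.BoundedFormula (Fin 3) 21 :=
  Relations.boundedFormula₂ rdvd s t

def mpF (a b c s : T3) : LangPDiv.BoundedFormula (Fin 3) 21 :=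
  pdvd ct1 b ⊓
    (((a =' ct0) ⊓ (c =' ct0)) ⊔
      ((∼(a =' ct0)) ⊓ pdvd a c ⊓ pdvd (tadd a ct1) (tadd c b) ⊓ (tadd b s =' c)))

def phi (p : ℕ) : LangPDiv.BoundedFormula (Fin 3) 21 :=
  mpF (bv 0) (bv 0) (bv 1) (bv 15) ⊓ mpF (bv 3) (bv 1) (bv 7) (bv 16) ⊓
  mpF (bv 5) (bv 1) (bv 8) (bv 17) ⊓ mpF (fv 0) (bv 2) (bv 9) (bv 18) ⊓
  mpF (bv 6) (bv 1) (bv 10) (bv 19) ⊓ mpF (bv 4) (bv 1) (bv 11) (bv 20) ⊓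
  (tadd (bv 2) (bv 3) =' tadd (tsm p (bv 7)) ct1) ⊓
  (tadd (bv 3) (bv 4) =' tadd (fv 1) (tsm p (bv 11))) ⊓
  (tadd (tsm p (bv 8)) (fv 0) =' tadd (bv 9) (bv 5)) ⊓
  (tadd (bv 5) (bv 6) =' tadd (tsm p (bv 10)) (fv 2)) ⊓
  (tadd (tadd (fv 0) (bv 12)) ct1 =' bv 0) ⊓
  (tadd (tadd (fv 1) (bv 13)) ct1 =' bv 0) ⊓
  (tadd (tadd (fv 2) (bv 14)) (tadd ct1 ct1) =' tsm p (bv 1))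

theorem phi_isQF (p : ℕ) : (phi p).IsQF := by
  have hat : ∀ s t : T3, (pdvd s t).IsQF := fun s t => (BoundedFormula.IsAtomic.rel _ _).isQF
  have heq : ∀ s t : T3, (s =' t).IsQF := fun s t => (BoundedFormula.IsAtomic.equal s t).isQF
  have hmp : ∀ a b c s : T3, (mpF a b c s).IsQF := fun a b c s =>
    (hat _ _).inf (((heq _ _).inf (heq _ _)).sup
      ((((heq _ _).not.inf (hat _ _)).inf (hat _ _)).inf (heq _ _)))
  exact ((((((((((((hmp _ _ _ _).inf (hmp _ _ _ _)).inf (hmp _ _ _ _)).inf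
    (hmp _ _ _ _)).inf (hmp _ _ _ _)).inf (hmp _ _ _ _)).inf (heq _ _)).inf
    (heq _ _)).inf (heq _ _)).inf (heq _ _)).inf (heq _ _)).inf (heq _ _)).inf (heq _ _)

section realize

variable (p : ℕ)

@[local simp]
theorem funMap_add (a b : ℕ) :
    @Structure.funMap LangPDiv ℕ (natPDivStructure p) 2 fadd ![a, b]
      = a + b := rfl

@[local simp]
theorem funMap_c0 :
    @Structure.funMap LangPDiv ℕ (natPDivStructure p) 0 f0 ![]
      = 0 := rfl

@[local simp]
theorem funMap_c1 :
    @Structure.funMap LangPDiv ℕ (natPDivStructure p) 0 f1 ![]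
      = 1 := rfl

@[local simp]
theorem relMap_eval (a b : ℕ) :
    @Structure.RelMap LangPDiv ℕ (natPDivStructure p) 2 rdvd ![a, b]
      ↔ ∃ k : ℕ, b = a * p ^ k := Iff.rfl

variable (env : Fin 3 ⊕ Fin 21 → ℕ)

@[local simp]
theorem realize_tadd (s t : T3) :
    @Term.realize LangPDiv ℕ (natPDivStructure p) _ env (tadd s t)
      = @Term.realize LangPDiv ℕ (natPDivStructure p) _ env s
        + @Term.realize LangPDiv ℕ (natPDivStructure p) _ env t := rfl

@[local simp]
theorem realize_ct0 : @Term.realize LangPDiv ℕ (natPDivStructure p) _ env ct0 = 0 := rfl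

@[local simp]
theorem realize_ct1 : @Term.realize LangPDiv ℕ (natPDivStructure p) _ env ct1 = 1 := rfl

@[local simp]
theorem realize_tsm (n : ℕ) (t : T3) :
    @Term.realize LangPDiv ℕ (natPDivStructure p) _ env (tsm n t)
      = n * @Term.realize LangPDiv ℕ (natPDivStructure p) _ env t := by
  induction n with
  | zero => simp [tsm]
  | succ n ih => rw [tsm, realize_tadd, ih, Nat.succ_mul]

@[local simp]
theorem realize_fv (i : Fin 3) :
    @Term.realize LangPDiv ℕ (natPDivStructure p) _ env (fv i) = env (Sum.inl i) := rfl

@[local simp]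
theorem realize_bv (i : Fin 21) :
    @Term.realize LangPDiv ℕ (natPDivStructure p) _ env (bv i) = env (Sum.inr i) := rfl


theorem realize_pdvd (s t : T3) (v : Fin 3 → ℕ) (xs : Fin 21 → ℕ) :
    @BoundedFormula.Realize LangPDiv ℕ (natPDivStructure p) _ _ (pdvd s t) v xs
      ↔ ∃ k : ℕ, @Term.realize LangPDiv ℕ (natPDivStructure p) _ (Sum.elim v xs) t
          = @Term.realize LangPDiv ℕ (natPDivStructure p) _ (Sum.elim v xs) s * p ^ k := by
  rw [pdvd, @BoundedFormula.realize_rel₂ LangPDiv ℕ (natPDivStructure p)]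
  exact Iff.rfl

theorem realize_mpF (a b c s : T3) (v : Fin 3 → ℕ) (xs : Fin 21 → ℕ) :
    @BoundedFormula.Realize LangPDiv ℕ (natPDivStructure p) _ _ (mpF a b c s) v xs
      ↔ MP p (@Term.realize LangPDiv ℕ (natPDivStructure p) _ (Sum.elim v xs) a)
          (@Term.realize LangPDiv ℕ (natPDivStructure p) _ (Sum.elim v xs) b)
          (@Term.realize LangPDiv ℕ (natPDivStructure p) _ (Sum.elim v xs) c)
          (@Term.realize LangPDiv ℕ (natPDivStructure p) _ (Sum.elim v xs) s) := by
  letI := natPDivStructure p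
  rw [mpF, MP]
  simp only [BoundedFormula.realize_inf, BoundedFormula.realize_sup,
    BoundedFormula.realize_not, BoundedFormula.realize_bdEqual, realize_pdvd,
    realize_tadd, realize_ct0, realize_ct1]

theorem realize_phi (v : Fin 3 → ℕ) (xs : Fin 21 → ℕ) :
    @BoundedFormula.Realize LangPDiv ℕ (natPDivStructure p) _ _ (phi p) v xs
      ↔ ((((((((((((MP p (xs 0) (xs 0) (xs 1) (xs 15) ∧ MP p (xs 3) (xs 1) (xs 7) (xs 16)) ∧
          MP p (xs 5) (xs 1) (xs 8) (xs 17)) ∧ MP p (v 0) (xs 2) (xs 9) (xs 18)) ∧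
          MP p (xs 6) (xs 1) (xs 10) (xs 19)) ∧ MP p (xs 4) (xs 1) (xs 11) (xs 20)) ∧
          xs 2 + xs 3 = p * xs 7 + 1) ∧ xs 3 + xs 4 = v 1 + p * xs 11) ∧
          p * xs 8 + v 0 = xs 9 + xs 5) ∧ xs 5 + xs 6 = p * xs 10 + v 2) ∧
          v 0 + xs 12 + 1 = xs 0) ∧ v 1 + xs 13 + 1 = xs 0) ∧
          v 2 + xs 14 + (1 + 1) = p * xs 1) := by
  letI := natPDivStructure p
  rw [phi]
  simp only [BoundedFormula.realize_inf, BoundedFormula.realize_bdEqual, realize_mpF,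
    realize_tadd, realize_ct1, realize_tsm, realize_fv, realize_bv, Sum.elim_inl, Sum.elim_inr]

end realize
end Stmt16


/-- Multiplication is existentially definable in `(ℕ, 0, 1, +, |_p)`:
there is a quantifier-free formula whose existential closure defines the graph of
multiplication on `ℕ`. -/
theorem stmt_16 (p : ℕ) (hp : p.Prime) :
    letI := natPDivStructure p
    ∃ (n : ℕ) (φ : LangPDiv.BoundedFormula (Fin 3) n), φ.IsQF ∧
      ∀ v : Fin 3 → ℕ, φ.exs.Realize v ↔ v 0 * v 1 = v 2 := by
  letI := natPDivStructure p
  refine ⟨21, Stmt16.phi p, Stmt16.phi_isQF p, fun v => ?_⟩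
  rw [Language.BoundedFormula.realize_exs]
  constructor
  · rintro ⟨xs, h⟩
    rw [Stmt16.realize_phi] at h
    obtain ⟨⟨⟨⟨⟨⟨⟨⟨⟨⟨⟨⟨m1, m2⟩, m3⟩, m4⟩, m5⟩, m6⟩, e1⟩, e2⟩, e3⟩, e4⟩, e5a⟩, e5b⟩, e6⟩ := h
    exact (Stmt16.core hp.two_le (v 0) (v 1) (v 2)).mp
      ⟨xs 0, xs 1, xs 2, xs 3, xs 4, xs 5, xs 6, xs 7, xs 8, xs 9, xs 10, xs 11, xs 12,
        xs 13, xs 14, xs 15, xs 16, xs 17, xs 18, xs 19, xs 20,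
        m1, m2, m3, m4, m5, m6, e1, e2, e3, e4, e5a, e5b, e6⟩
  · intro h
    obtain ⟨N, M₁, W, A, T, S, Q, B, C, D, E, G, r₁, r₂, f, s₁, s₂, s₃, s₄, s₅, s₆,
      m1, m2, m3, m4, m5, m6, e1, e2, e3, e4, e5a, e5b, e6⟩ :=
      (Stmt16.core hp.two_le (v 0) (v 1) (v 2)).mpr h
    refine ⟨![N, M₁, W, A, T, S, Q, B, C, D, E, G, r₁, r₂, f, s₁, s₂, s₃, s₄, s₅, s₆], ?_⟩
    rw [Stmt16.realize_phi]
    exact ⟨⟨⟨⟨⟨⟨⟨⟨⟨⟨⟨⟨m1, m2⟩, m3⟩, m4⟩, m5⟩, m6⟩, e1⟩, e2⟩, e3⟩, e4⟩, e5a⟩, e5b⟩, e6⟩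
end
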